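/- arXiv:2211.09485 — 6 statements merged into one kernel-verified Lean document; each statement's English description precedes it below -/
import Mathlib

section
/- If a k-cochain f on a simplicial complex X is α-double balanced in dimension ℓ (i.e., for every ℓ-face σ, ‖f_σ‖ ≤ α · E_{u∈σ}‖(f_{σ∖u})^u‖, where f_σ is the localization of f to the link of σ and f^u the restriction of f to the link of u, and norms are weighted densities), with 1 ≤ α < ℓ+1, then f is α'-double balanced in dimension ℓ−1, where α' = αℓ/(ℓ+1−α). -/
open Finset

/-- A finite simplicial complex on vertex set `V`: a downwards-closed family of finite sets. -/
structure SC (V : Type*) [DecidableEq V] where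
  faces : Finset (Finset V)
  downClosed : ∀ σ ∈ faces, ∀ τ ⊆ σ, τ ∈ faces

namespace SC

variable {V : Type*} [DecidableEq V] [Fintype V] (X : SC V)

/-- The number of top faces (of cardinality `d+1`) containing `σ`. -/
def topCount (d : ℕ) (σ : Finset V) : ℕ :=
  (X.faces.filter fun Δ => Δ.card = d + 1 ∧ σ ⊆ Δ).card

/-- `X` is a (nonempty) pure `d`-dimensional complex: every face is contained in a
face of cardinality `d+1`. -/
def Pure (d : ℕ) : Prop :=
  (∅ : Finset V) ∈ X.faces ∧ (∀ σ ∈ X.faces, σ.card ≤ d + 1) ∧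
    ∀ σ ∈ X.faces, ∃ Δ ∈ X.faces, σ ⊆ Δ ∧ Δ.card = d + 1

/-- The `k`-dimensional faces (cardinality `k+1`) of `X`. -/
def kFaces (k : ℕ) : Finset (Finset V) := X.faces.filter fun σ => σ.card = k + 1

/-- The faces of cardinality `c` of the link of `σ`. -/
def linkFacesC (σ : Finset V) (c : ℕ) : Finset (Finset V) :=
  univ.filter fun τ => Disjoint τ σ ∧ σ ∪ τ ∈ X.faces ∧ τ.card = c

/-- The weighted density, in the link of `σ` of a pure `d`-dimensional complex, of a set
`S` of cardinality-`c` faces of the link, with respect to the distribution induced by the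
uniform distribution on top faces. -/
noncomputable def linkNorm (d : ℕ) (σ : Finset V) (c : ℕ) (S : Finset (Finset V)) : ℝ :=
  (∑ τ ∈ S, (X.topCount d (σ ∪ τ) : ℝ)) /
    (((d + 1 - σ.card).choose c : ℝ) * (X.topCount d σ : ℝ))

/-- The localization `f_σ` of a set `f` of faces to the link of `σ`:
all `τ` (disjoint from `σ`) with `σ ∪ τ ∈ f`. -/
def loc (_X : SC V) (f : Finset (Finset V)) (σ : Finset V) : Finset (Finset V) :=
  univ.filter fun τ => Disjoint τ σ ∧ σ ∪ τ ∈ f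

/-- The restriction of the localization, `(f_{σ∖u})^u`, viewed in the link of `σ`:
all faces `τ` of the link of `σ` with `(σ ∖ {u}) ∪ τ ∈ f`. -/
def restLoc (f : Finset (Finset V)) (σ : Finset V) (u : V) : Finset (Finset V) :=
  univ.filter fun τ => Disjoint τ σ ∧ σ ∪ τ ∈ X.faces ∧ σ.erase u ∪ τ ∈ f

/-- The restriction `f^u` of a set `f` of `k`-faces to the link of the vertex `u`. -/
def restrict (f : Finset (Finset V)) (u : V) : Finset (Finset V) :=
  f.filter fun τ => u ∉ τ ∧ insert u τ ∈ X.faces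

/-- `f` (a set of `k`-faces) is `α`-double balanced in dimension `ℓ`:
for every `ℓ`-face `σ`, `‖f_σ‖ ≤ α · E_{u∈σ} ‖(f_{σ∖u})^u‖`. -/
noncomputable def DoubleBalanced (d k : ℕ) (f : Finset (Finset V)) (α : ℝ) (ℓ : ℕ) : Prop :=
  ∀ σ ∈ X.kFaces ℓ,
    X.linkNorm d σ (k - ℓ) (X.loc f σ) ≤
      α * ((σ.card : ℝ)⁻¹ * ∑ u ∈ σ, X.linkNorm d σ (k - ℓ + 1) (X.restLoc f σ u))

/-- `δᵢ(f)`: the `(k+1)`-dimensional faces containing exactly `i` `k`-faces of `f`. -/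
def deltaI (k i : ℕ) (f : Finset (Finset V)) : Finset (Finset V) :=
  (X.kFaces (k + 1)).filter fun ρ => ((ρ.powersetCard (k + 1)).filter (· ∈ f)).card = i

/-- The mutual weight `‖(g, σ)‖` of a set `g` of faces of the link of `σ`, where `σ ∪ τ`
has cardinality `m` for `τ ∈ g`: the probability that a random `(m-1)`-dimensional face
`ρ` together with a uniformly random `σ.card`-subset `σ'` of `ρ` satisfies
`σ' = σ` and `ρ ∖ σ ∈ g`. -/
noncomputable def mutualWeight (d m : ℕ) (σ : Finset V) (g : Finset (Finset V)) : ℝ :=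
  ∑ τ ∈ g, (X.topCount d (σ ∪ τ) : ℝ) /
    (((d + 1).choose m : ℝ) * (m.choose σ.card : ℝ) * (X.topCount d ∅ : ℝ))

/-- The vertex-set localization of `f` to the link of `σ`. -/
def locV (_X : SC V) (f : Finset (Finset V)) (σ : Finset V) : Finset V :=
  univ.filter fun v => v ∉ σ ∧ insert v σ ∈ f

/-- The edges of the link of `σ` with exactly `i` endpoints in the localization `f_σ`. -/
def linkDelta (σ : Finset V) (i : ℕ) (f : Finset (Finset V)) : Finset (Finset V) :=
  (X.linkFacesC σ 2).filter fun e => (e ∩ X.locV f σ).card = i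

/-- The (off-diagonal) adjacency weights of the underlying graph of the link of `σ`. -/
noncomputable def linkAdj (d : ℕ) (σ : Finset V) (u v : V) : ℝ :=
  if u ≠ v then (X.topCount d (σ ∪ {u, v}) : ℝ) else 0

/-- The underlying weighted graph of the link of `σ` is a `lam`-one-sided spectral
expander: the quadratic form of the adjacency operator on functions orthogonal
(w.r.t. the vertex measure) to constants is at most `lam` times the norm. -/
def OneSidedLink (d : ℕ) (lam : ℝ) (σ : Finset V) : Prop :=
  ∀ g : V → ℝ, (∑ v, (X.topCount d (insert v σ) : ℝ) * g v) = 0 →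
    ∑ u, ∑ v, X.linkAdj d σ u v * g u * g v ≤
      lam * (((d - σ.card : ℕ) : ℝ) * ∑ v, (X.topCount d (insert v σ) : ℝ) * g v ^ 2)

/-- `X` is a `lam`-one-sided local spectral expander: the underlying graph of the link of
every face of dimension at most `d-2` (including the empty face) is a `lam`-one-sided
spectral expander. -/
def OneSidedLocalExpander (d : ℕ) (lam : ℝ) : Prop :=
  ∀ σ ∈ X.faces, σ.card + 1 ≤ d → X.OneSidedLink d lam σ

/-- The coboundary (over `𝔽₂`, in the link of `σ`) of a set `h` of cardinality-`c` faces: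
the cardinality-`(c+1)` faces of the link containing an odd number of
cardinality-`c` subfaces from `h`. -/
def cob (σ : Finset V) (c : ℕ) (h : Finset (Finset V)) : Finset (Finset V) :=
  (X.linkFacesC σ (c + 1)).filter fun τ => ¬ Even ((τ.powersetCard c ∩ h).card)

/-- `g` (a set of cardinality-`(c+1)` faces of the link of `σ`) is a cocycle: every
cardinality-`(c+2)` face of the link contains an even number of faces of `g`. -/
def IsCocycle (σ : Finset V) (c : ℕ) (g : Finset (Finset V)) : Prop :=
  ∀ τ ∈ X.linkFacesC σ (c + 2), Even ((τ.powersetCard (c + 1) ∩ g).card)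

/-- `g` (a set of cardinality-`(c+1)` faces of the link of `σ`) is a coboundary. -/
def IsCoboundary (σ : Finset V) (c : ℕ) (g : Finset (Finset V)) : Prop :=
  ∃ h ⊆ X.linkFacesC σ c, g = X.cob σ c h

/-- The distance (over `𝔽₂`) of `g` from the space of coboundaries, in the link of `σ`,
where `g` is a set of cardinality-`(c+1)` faces. -/
noncomputable def distToCob (d : ℕ) (σ : Finset V) (c : ℕ) (g : Finset (Finset V)) : ℝ :=
  ((X.linkFacesC σ c).powerset).inf' ⟨∅, Finset.empty_mem_powerset _⟩ fun h =>
    X.linkNorm d σ (c + 1) ((g \ X.cob σ c h) ∪ (X.cob σ c h \ g))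

/-- `g` (a set of cardinality-`(c+1)` faces of the link of `σ`) is a minimal cochain:
its weight cannot be reduced by adding a coboundary. -/
def MinimalCochain (d : ℕ) (σ : Finset V) (c : ℕ) (g : Finset (Finset V)) : Prop :=
  X.linkNorm d σ (c + 1) g = X.distToCob d σ c g

/-- The link of `σ` is a `β`-coboundary expander: in every dimension, the weight of the
coboundary of a cochain is at least `β` times its distance from the coboundaries. -/
def LinkCoboundaryExpander (d : ℕ) (β : ℝ) (σ : Finset V) : Prop :=
  ∀ c : ℕ, ∀ g ⊆ X.linkFacesC σ (c + 1),
    β * X.distToCob d σ c g ≤ X.linkNorm d σ (c + 2) (X.cob σ (c + 1) g)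

/-- A set `f` of `k`-dimensional faces is locally minimal: its localization to the link of
every nonempty face of dimension `< k` is a minimal cochain there. -/
def LocallyMinimal (d k : ℕ) (f : Finset (Finset V)) : Prop :=
  ∀ σ ∈ X.faces, 1 ≤ σ.card → σ.card ≤ k →
    X.MinimalCochain d σ (k - σ.card) (X.loc f σ)

end SC


set_option linter.unusedSectionVars false

namespace DBI

open SC

variable {V : Type*} [DecidableEq V] [Fintype V] (X : SC V)

lemma topCount_pos {d : ℕ} (hpure : X.Pure d) {σ : Finset V} (hσ : σ ∈ X.faces) :
    0 < X.topCount d σ := by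
  obtain ⟨Δ, hΔ, hsub, hcard⟩ := hpure.2.2 σ hσ
  exact Finset.card_pos.mpr ⟨Δ, Finset.mem_filter.mpr ⟨hΔ, hcard, hsub⟩⟩

lemma mem_faces_of_topCount_ne_zero {d : ℕ} {σ : Finset V} (h : X.topCount d σ ≠ 0) :
    σ ∈ X.faces := by
  obtain ⟨Δ, hΔ⟩ := Finset.card_pos.mp (Nat.pos_of_ne_zero h)
  rw [Finset.mem_filter] at hΔ
  exact X.downClosed Δ hΔ.1 σ hΔ.2.2

lemma sum_topCount_insert (d : ℕ) (ρ : Finset V) :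
    ∑ v ∈ ρᶜ, X.topCount d (insert v ρ) = (d + 1 - ρ.card) * X.topCount d ρ := by
  unfold SC.topCount
  simp_rw [Finset.card_filter]
  rw [Finset.sum_comm, Finset.mul_sum]
  apply Finset.sum_congr rfl
  intro Δ hΔ
  by_cases h : Δ.card = d + 1 ∧ ρ ⊆ Δ
  · have : ∀ v ∈ ρᶜ, (if Δ.card = d + 1 ∧ insert v ρ ⊆ Δ then 1 else 0)
        = (if v ∈ Δ then 1 else 0) := by
      intro v hv
      simp [Finset.insert_subset_iff, h.1, h.2]
    rw [Finset.sum_congr rfl this]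
    rw [Finset.sum_ite_mem]
    simp only [Finset.sum_const, smul_eq_mul, mul_one]
    have : ρᶜ ∩ Δ = Δ \ ρ := by
      ext v; simp [Finset.mem_sdiff, and_comm]
    rw [this, Finset.card_sdiff_of_subset h.2, h.1]
    simp [h.2]
  · rw [if_neg h]
    rw [mul_zero, Finset.sum_eq_zero]
    intro v hv
    rw [if_neg]
    rintro ⟨h1, h2⟩
    exact h ⟨h1, (Finset.subset_insert v ρ).trans h2⟩

lemma loc_card {k : ℕ} {f : Finset (Finset V)} (hf : f ⊆ X.kFaces k) {σ τ : Finset V}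
    (hτ : τ ∈ X.loc f σ) : σ.card + τ.card = k + 1 := by
  rw [SC.loc, Finset.mem_filter] at hτ
  obtain ⟨-, hd, hm⟩ := hτ
  have := hf hm
  rw [SC.kFaces, Finset.mem_filter] at this
  rw [← this.2, Finset.card_union_of_disjoint hd.symm]

lemma loc_union_card {k : ℕ} {f : Finset (Finset V)} (hf : f ⊆ X.kFaces k) {σ τ : Finset V}
    (hτ : τ ∈ X.loc f σ) : (σ ∪ τ).card = k + 1 := by
  rw [SC.loc, Finset.mem_filter] at hτ
  have := hf hτ.2.2
  rw [SC.kFaces, Finset.mem_filter] at this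
  exact this.2

lemma restLoc_card {k : ℕ} {f : Finset (Finset V)} (hf : f ⊆ X.kFaces k) {σ τ : Finset V}
    {u : V} (hu : u ∈ σ) (hτ : τ ∈ X.restLoc f σ u) : σ.card + τ.card = k + 2 := by
  rw [SC.restLoc, Finset.mem_filter] at hτ
  obtain ⟨-, hd, -, hm⟩ := hτ
  have hm' := hf hm
  rw [SC.kFaces, Finset.mem_filter] at hm'
  have hd' : Disjoint (σ.erase u) τ :=
    Finset.disjoint_of_subset_left (Finset.erase_subset _ _) hd.symm
  have h1 : (σ.erase u).card + τ.card = k + 1 := by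
    rw [← hm'.2, Finset.card_union_of_disjoint hd']
  have h2 : σ.card - 1 = (σ.erase u).card := by rw [Finset.card_erase_of_mem hu]
  have h3 : 1 ≤ σ.card := Finset.card_pos.mpr ⟨u, hu⟩
  omega

lemma loc_insert_sum (f : Finset (Finset V)) (σ : Finset V) {v : V} (hv : v ∉ σ)
    (g : Finset V → ℕ) :
    ∑ τ ∈ X.loc f (insert v σ), g (insert v σ ∪ τ) =
      ∑ τ ∈ (X.loc f σ).filter (v ∈ ·), g (σ ∪ τ) := by
  apply Finset.sum_nbij' (i := fun τ => insert v τ) (j := fun τ => τ.erase v)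
  · intro τ hτ
    rw [SC.loc, Finset.mem_filter] at hτ
    obtain ⟨-, hd, hm⟩ := hτ
    rw [Finset.disjoint_insert_right] at hd
    rw [Finset.mem_filter, SC.loc, Finset.mem_filter]
    refine ⟨⟨Finset.mem_univ _, ?_, ?_⟩, Finset.mem_insert_self _ _⟩
    · rw [Finset.disjoint_insert_left]; exact ⟨hv, hd.2⟩
    · rwa [Finset.union_insert, ← Finset.insert_union]
  · intro τ hτ
    rw [Finset.mem_filter, SC.loc, Finset.mem_filter] at hτ
    obtain ⟨⟨-, hd, hm⟩, hvτ⟩ := hτ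
    rw [SC.loc, Finset.mem_filter]
    refine ⟨Finset.mem_univ _, ?_, ?_⟩
    · rw [Finset.disjoint_insert_right]
      exact ⟨Finset.notMem_erase _ _, Finset.disjoint_of_subset_left (Finset.erase_subset _ _) hd⟩
    · rwa [Finset.insert_union, ← Finset.union_insert, Finset.insert_erase hvτ]
  · intro τ hτ
    rw [SC.loc, Finset.mem_filter] at hτ
    have : v ∉ τ := (Finset.disjoint_insert_right.mp hτ.2.1).1
    rw [Finset.erase_insert this]
  · intro τ hτ
    rw [Finset.mem_filter] at hτ
    rw [Finset.insert_erase hτ.2]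
  · intro τ hτ
    rw [Finset.union_insert, ← Finset.insert_union]

lemma restLoc_insert_sum (f : Finset (Finset V)) (σ : Finset V) {u v : V}
    (hv : v ∉ σ) (hu : u ∈ σ) (g : Finset V → ℕ) :
    ∑ τ ∈ X.restLoc f (insert v σ) u, g (insert v σ ∪ τ) =
      ∑ τ ∈ (X.restLoc f σ u).filter (v ∈ ·), g (σ ∪ τ) := by
  have hne : v ≠ u := fun h => hv (h ▸ hu)
  have herase : (insert v σ).erase u = insert v (σ.erase u) :=
    Finset.erase_insert_of_ne hne
  apply Finset.sum_nbij' (i := fun τ => insert v τ) (j := fun τ => τ.erase v)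
  · intro τ hτ
    rw [SC.restLoc, Finset.mem_filter] at hτ
    obtain ⟨-, hd, hX, hm⟩ := hτ
    rw [Finset.disjoint_insert_right] at hd
    rw [Finset.mem_filter, SC.restLoc, Finset.mem_filter]
    refine ⟨⟨Finset.mem_univ _, ?_, ?_, ?_⟩, Finset.mem_insert_self _ _⟩
    · rw [Finset.disjoint_insert_left]; exact ⟨hv, hd.2⟩
    · rwa [Finset.union_insert, ← Finset.insert_union]
    · rw [herase, Finset.insert_union, ← Finset.union_insert] at hm; exact hm
  · intro τ hτ
    rw [Finset.mem_filter, SC.restLoc, Finset.mem_filter] at hτ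
    obtain ⟨⟨-, hd, hX, hm⟩, hvτ⟩ := hτ
    rw [SC.restLoc, Finset.mem_filter]
    refine ⟨Finset.mem_univ _, ?_, ?_, ?_⟩
    · rw [Finset.disjoint_insert_right]
      exact ⟨Finset.notMem_erase _ _, Finset.disjoint_of_subset_left (Finset.erase_subset _ _) hd⟩
    · rwa [Finset.insert_union, ← Finset.union_insert, Finset.insert_erase hvτ]
    · rw [herase, Finset.insert_union, ← Finset.union_insert, Finset.insert_erase hvτ]
      exact hm
  · intro τ hτ
    rw [SC.restLoc, Finset.mem_filter] at hτ
    have : v ∉ τ := (Finset.disjoint_insert_right.mp hτ.2.1).1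
    rw [Finset.erase_insert this]
  · intro τ hτ
    rw [Finset.mem_filter] at hτ
    rw [Finset.insert_erase hτ.2]
  · intro τ hτ
    rw [Finset.union_insert, ← Finset.insert_union]

lemma swap_filter_sum (σ : Finset V) (S : Finset (Finset V)) (c : ℕ)
    (hS : ∀ τ ∈ S, Disjoint τ σ) (hc : ∀ τ ∈ S, τ.card = c) (g : Finset V → ℕ) :
    ∑ v ∈ σᶜ, ∑ τ ∈ S.filter (v ∈ ·), g τ = c * ∑ τ ∈ S, g τ := by
  simp_rw [Finset.sum_filter]
  rw [Finset.sum_comm, Finset.mul_sum]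
  apply Finset.sum_congr rfl
  intro τ hτ
  rw [Finset.sum_ite_mem]
  have : σᶜ ∩ τ = τ := by
    apply Finset.inter_eq_right.mpr
    intro v hvτ
    rw [Finset.mem_compl]
    exact fun hvσ => (Finset.disjoint_left.mp (hS τ hτ)) hvτ hvσ
  rw [this, Finset.sum_const, hc τ hτ, smul_eq_mul]

lemma topCount_zero_of_superset {d : ℕ} {ρ ρ' : Finset V} (h : ρ ∉ X.faces)
    (hsub : ρ ⊆ ρ') : X.topCount d ρ' = 0 := by
  by_contra hne
  exact h (X.downClosed ρ' (mem_faces_of_topCount_ne_zero X hne) ρ hsub)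

lemma sumA (d k : ℕ) (f : Finset (Finset V)) (hf : f ⊆ X.kFaces k) (σ : Finset V) :
    ∑ v ∈ σᶜ, ∑ τ ∈ X.loc f (insert v σ), X.topCount d (insert v σ ∪ τ) =
      (k + 1 - σ.card) * ∑ τ ∈ X.loc f σ, X.topCount d (σ ∪ τ) := by
  rw [← swap_filter_sum σ (X.loc f σ) (k + 1 - σ.card)
      (fun τ hτ => ((Finset.mem_filter.mp hτ).2).1)
      (fun τ hτ => by have := loc_card X hf hτ; omega)
      (fun τ => X.topCount d (σ ∪ τ))]
  apply Finset.sum_congr rfl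
  intro v hv
  exact loc_insert_sum X f σ (Finset.mem_compl.mp hv) _

lemma sumB (d k : ℕ) (f : Finset (Finset V)) (hf : f ⊆ X.kFaces k) (σ : Finset V)
    {u : V} (hu : u ∈ σ) :
    ∑ v ∈ σᶜ, ∑ τ ∈ X.restLoc f (insert v σ) u, X.topCount d (insert v σ ∪ τ) =
      (k + 2 - σ.card) * ∑ τ ∈ X.restLoc f σ u, X.topCount d (σ ∪ τ) := by
  rw [← swap_filter_sum σ (X.restLoc f σ u) (k + 2 - σ.card)
      (fun τ hτ => ((Finset.mem_filter.mp hτ).2).1)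
      (fun τ hτ => by have := restLoc_card X hf hu hτ; omega)
      (fun τ => X.topCount d (σ ∪ τ))]
  apply Finset.sum_congr rfl
  intro v hv
  exact restLoc_insert_sum X f σ (Finset.mem_compl.mp hv) hu _

lemma sumDiag (d k : ℕ) (f : Finset (Finset V)) (hf : f ⊆ X.kFaces k) (σ : Finset V) :
    ∑ v ∈ σᶜ, ∑ τ ∈ X.restLoc f (insert v σ) v, X.topCount d (insert v σ ∪ τ) =
      (d - k) * ∑ τ ∈ X.loc f σ, X.topCount d (σ ∪ τ) := by
  have step1 : ∀ v ∈ σᶜ,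
      ∑ τ ∈ X.restLoc f (insert v σ) v, X.topCount d (insert v σ ∪ τ) =
        ∑ τ ∈ (X.loc f σ).filter (fun τ => v ∉ τ), X.topCount d (insert v (σ ∪ τ)) := by
    intro v hv
    rw [Finset.mem_compl] at hv
    have hset : X.restLoc f (insert v σ) v =
        ((X.loc f σ).filter (fun τ => v ∉ τ)).filter
          (fun τ => insert v (σ ∪ τ) ∈ X.faces) := by
      ext τ
      simp only [SC.restLoc, SC.loc, Finset.mem_filter, Finset.mem_univ, true_and,
        Finset.disjoint_insert_right, Finset.erase_insert hv, Finset.insert_union]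
      tauto
    rw [hset, Finset.sum_filter]
    apply Finset.sum_congr rfl
    intro τ hτ
    by_cases hface : insert v (σ ∪ τ) ∈ X.faces
    · rw [if_pos hface, Finset.insert_union]
    · rw [if_neg hface]
      exact (topCount_zero_of_superset X hface (Finset.Subset.refl _)).symm
  rw [Finset.sum_congr rfl step1]
  simp_rw [Finset.sum_filter]
  rw [Finset.sum_comm, Finset.mul_sum]
  apply Finset.sum_congr rfl
  intro τ hτ
  have hρ : (σ ∪ τ).card = k + 1 := loc_union_card X hf hτ
  have hd : Disjoint τ σ := ((Finset.mem_filter.mp hτ).2).1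
  have hidx : ∀ v ∈ σᶜ, (if v ∉ τ then X.topCount d (insert v (σ ∪ τ)) else 0) =
      if v ∈ (σ ∪ τ)ᶜ then X.topCount d (insert v (σ ∪ τ)) else 0 := by
    intro v hv
    rw [Finset.mem_compl] at hv
    simp only [Finset.mem_compl, Finset.mem_union]
    by_cases h : v ∈ τ
    · simp [h, hv]
    · simp [h, hv]
  rw [Finset.sum_congr rfl hidx]
  have hsub : (σ ∪ τ)ᶜ ⊆ σᶜ := Finset.compl_subset_compl.mpr Finset.subset_union_left
  rw [← Finset.sum_filter, Finset.filter_mem_eq_inter, Finset.inter_eq_right.mpr hsub,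
    sum_topCount_insert X d (σ ∪ τ), hρ]
  congr 1
  omega

lemma alg {x s p q n c : ℝ} (hp : 0 < p) (hq : 0 < q) (hn : 0 < n)
    (h : x / (p * n) ≤ c * (s / (q * n))) : q * x ≤ c * (p * s) := by
  have key : c * (s / (q * n)) = (c * s) / (q * n) := by ring
  rw [key, div_le_div_iff₀ (by positivity) (by positivity)] at h
  have h2 : (q * x) * n ≤ (c * (p * s)) * n := by
    calc (q * x) * n = x * (q * n) := by ring
    _ ≤ c * s * (p * n) := h
    _ = (c * (p * s)) * n := by ring
  exact le_of_mul_le_mul_right h2 hn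

end DBI

set_option maxHeartbeats 1000000 in
/-- **Double balance inheritance** (Lemma 3.2 / intro Lemma 1.2): if a set `f` of `k`-faces
of a pure `d`-dimensional complex is `α`-double balanced in dimension `ℓ` with
`1 ≤ α < ℓ+1`, then it is `αℓ/(ℓ+1−α)`-double balanced in dimension `ℓ−1`. -/
theorem double_balance_inheritance {V : Type*} [DecidableEq V] [Fintype V]
    (X : SC V) (d k ℓ : ℕ) (α : ℝ) (hpure : X.Pure d) (hℓ : 1 ≤ ℓ) (hℓk : ℓ < k)
    (hkd : k ≤ d) (hα1 : 1 ≤ α) (hα2 : α < (ℓ : ℝ) + 1)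
    (f : Finset (Finset V)) (hf : f ⊆ X.kFaces k)
    (hdb : X.DoubleBalanced d k f α ℓ) :
    X.DoubleBalanced d k f (α * ℓ / ((ℓ : ℝ) + 1 - α)) (ℓ - 1) := by
  have hα0 : (0:ℝ) < α := lt_of_lt_of_le one_pos hα1
  intro σ hσ
  rw [SC.kFaces, Finset.mem_filter] at hσ
  obtain ⟨hσf, hσc⟩ := hσ
  have hσcard : σ.card = ℓ := by omega
  have hm1 : 1 ≤ k - ℓ := by omega
  have hme : k - ℓ ≤ d - ℓ := by omega
  simp only [SC.linkNorm]
  rw [hσcard, show d + 1 - ℓ = (d-ℓ) + 1 from by omega,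
    show k - (ℓ - 1) = (k-ℓ) + 1 from by omega]
  have hN : 0 < X.topCount d σ := DBI.topCount_pos X hpure hσf
  have hNR : (0:ℝ) < (X.topCount d σ : ℝ) := by exact_mod_cast hN
  -- abbreviations (ℕ)
  have hAcast : ∑ τ ∈ X.loc f σ, ((X.topCount d (σ ∪ τ) : ℕ) : ℝ)
      = ((∑ τ ∈ X.loc f σ, X.topCount d (σ ∪ τ) : ℕ) : ℝ) := by push_cast; rfl
  have hBcast : ∀ u : V, ∑ τ ∈ X.restLoc f σ u, ((X.topCount d (σ ∪ τ) : ℕ) : ℝ)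
      = ((∑ τ ∈ X.restLoc f σ u, X.topCount d (σ ∪ τ) : ℕ) : ℝ) := by
    intro u; push_cast; rfl
  rw [hAcast]
  simp only [hBcast]
  rw [← Finset.sum_div, ← Nat.cast_sum]
  by_cases hkd' : k = d
  · -- boundary case k = d
    have hA'0 : ∀ v ∈ σᶜ,
        ∑ τ ∈ X.loc f (insert v σ), X.topCount d (insert v σ ∪ τ) = 0 := by
      intro v hv
      rw [Finset.mem_compl] at hv
      by_cases hface : insert v σ ∈ X.faces
      · have hmem : insert v σ ∈ X.kFaces ℓ := Finset.mem_filter.mpr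
          ⟨hface, by rw [Finset.card_insert_of_notMem hv, hσcard]⟩
        have H := hdb _ hmem
        simp only [SC.linkNorm] at H
        rw [Finset.card_insert_of_notMem hv, hσcard,
          show d + 1 - (ℓ + 1) = (d-ℓ) from by omega] at H
        rw [show (d-ℓ).choose (k - ℓ + 1) = 0 from
          Nat.choose_eq_zero_of_lt (by omega)] at H
        simp only [Nat.cast_zero, zero_mul, div_zero, Finset.sum_const_zero,
          mul_zero] at H
        have hN' : (0:ℝ) < (((d-ℓ).choose (k - ℓ) : ℕ) : ℝ) * (X.topCount d (insert v σ) : ℝ) := by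
          have h1 : 0 < (d-ℓ).choose (k - ℓ) := Nat.choose_pos (by omega)
          have h2 : 0 < X.topCount d (insert v σ) := DBI.topCount_pos X hpure hface
          have h1' : (0:ℝ) < (((d-ℓ).choose (k - ℓ) : ℕ) : ℝ) := by exact_mod_cast h1
          have h2' : (0:ℝ) < (X.topCount d (insert v σ) : ℝ) := by exact_mod_cast h2
          positivity
        have H' : (∑ τ ∈ X.loc f (insert v σ), ((X.topCount d (insert v σ ∪ τ) : ℕ) : ℝ)) /
            (((d-ℓ).choose (k - ℓ) : ℝ) * (X.topCount d (insert v σ) : ℝ)) ≤ 0 := H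
        have h3 : (0:ℝ) ≤ ∑ τ ∈ X.loc f (insert v σ), ((X.topCount d (insert v σ ∪ τ) : ℕ) : ℝ) :=
          Finset.sum_nonneg fun τ _ => Nat.cast_nonneg _
        have h4 : ∑ τ ∈ X.loc f (insert v σ), ((X.topCount d (insert v σ ∪ τ) : ℕ) : ℝ) = 0 := by
          by_contra hne
          have hpos := lt_of_le_of_ne h3 (Ne.symm hne)
          have := div_pos hpos hN'
          linarith
        exact_mod_cast h4
      · exact Finset.sum_eq_zero fun τ hτ =>
          DBI.topCount_zero_of_superset X hface Finset.subset_union_left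
    have hsum := DBI.sumA X d k f hf σ
    rw [Finset.sum_eq_zero hA'0, hσcard] at hsum
    have hA0 : ∑ τ ∈ X.loc f σ, X.topCount d (σ ∪ τ) = 0 := by
      have : k + 1 - ℓ = (k-ℓ) + 1 := by omega
      rw [this] at hsum
      rcases Nat.mul_eq_zero.mp hsum.symm with h | h
      · omega
      · exact h
    rw [hA0]
    rw [show ((d-ℓ)+1).choose ((k-ℓ) + 1 + 1) = 0 from Nat.choose_eq_zero_of_lt (by omega)]
    simp
  · -- main case k < d
    have hkd2 : k < d := lt_of_le_of_ne hkd hkd'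
    have hmlt : (k-ℓ) < (d-ℓ) := by omega
    have PV : ∀ v ∈ σᶜ,
        (((d-ℓ).choose ((k-ℓ)+1) : ℕ) : ℝ) *
          ((∑ τ ∈ X.loc f (insert v σ), X.topCount d (insert v σ ∪ τ) : ℕ) : ℝ) ≤
        (α * ((ℓ:ℝ) + 1)⁻¹) * ((((d-ℓ).choose (k-ℓ) : ℕ) : ℝ) *
          (((∑ τ ∈ X.restLoc f (insert v σ) v, X.topCount d (insert v σ ∪ τ) : ℕ) : ℝ) +
            ∑ u ∈ σ, ((∑ τ ∈ X.restLoc f (insert v σ) u, X.topCount d (insert v σ ∪ τ) : ℕ) : ℝ))) := by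
      intro v hv
      rw [Finset.mem_compl] at hv
      by_cases hface : insert v σ ∈ X.faces
      · have hmem : insert v σ ∈ X.kFaces ℓ := Finset.mem_filter.mpr
          ⟨hface, by rw [Finset.card_insert_of_notMem hv, hσcard]⟩
        have H := hdb _ hmem
        simp only [SC.linkNorm] at H
        rw [Finset.card_insert_of_notMem hv, hσcard,
          show d + 1 - (ℓ + 1) = (d-ℓ) from by omega,
          Finset.sum_insert hv, ← Finset.sum_div, ← add_div] at H
        have hCa : (0:ℝ) < (((d-ℓ).choose (k - ℓ) : ℕ) : ℝ) := by
          exact_mod_cast Nat.choose_pos (by omega : k - ℓ ≤ (d-ℓ))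
        have hCb : (0:ℝ) < (((d-ℓ).choose (k - ℓ + 1) : ℕ) : ℝ) := by
          exact_mod_cast Nat.choose_pos (by omega : k - ℓ + 1 ≤ (d-ℓ))
        have hN' : (0:ℝ) < (X.topCount d (insert v σ) : ℝ) := by
          exact_mod_cast DBI.topCount_pos X hpure hface
        rw [← mul_assoc] at H
        have halg := DBI.alg hCa hCb hN' H
        push_cast at halg ⊢
        convert halg using 2 <;> norm_cast
      · have hz : ∑ τ ∈ X.loc f (insert v σ), X.topCount d (insert v σ ∪ τ) = 0 :=
          Finset.sum_eq_zero fun τ hτ =>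
            DBI.topCount_zero_of_superset X hface Finset.subset_union_left
        rw [hz, Nat.cast_zero, mul_zero]
        refine mul_nonneg (mul_nonneg hα0.le (by positivity))
          (mul_nonneg (Nat.cast_nonneg _) (add_nonneg (Nat.cast_nonneg _)
            (Finset.sum_nonneg fun u _ => Nat.cast_nonneg _)))
    have SUM := Finset.sum_le_sum PV
    -- identities
    have natA := DBI.sumA X d k f hf σ
    rw [hσcard, show k + 1 - ℓ = (k-ℓ) + 1 from by omega] at natA
    have natD := DBI.sumDiag X d k f hf σ
    have natB : ∀ u ∈ σ,
        ∑ v ∈ σᶜ, ∑ τ ∈ X.restLoc f (insert v σ) u, X.topCount d (insert v σ ∪ τ) =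
          ((k-ℓ) + 2) * ∑ τ ∈ X.restLoc f σ u, X.topCount d (σ ∪ τ) := by
      intro u hu
      rw [DBI.sumB X d k f hf σ hu, hσcard, show k + 2 - ℓ = (k-ℓ) + 2 from by omega]
    -- convert SUM into clean form
    have lhsEq : ∑ v ∈ σᶜ, (((d-ℓ).choose ((k-ℓ)+1) : ℕ) : ℝ) *
        ((∑ τ ∈ X.loc f (insert v σ), X.topCount d (insert v σ ∪ τ) : ℕ) : ℝ) =
        (((d-ℓ).choose ((k-ℓ)+1) : ℕ) : ℝ) * ((((k-ℓ:ℕ):ℝ) + 1) *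
          ((∑ τ ∈ X.loc f σ, X.topCount d (σ ∪ τ) : ℕ) : ℝ)) := by
      rw [← Finset.mul_sum, ← Nat.cast_sum, natA]
      norm_cast
    have rhsEq : ∑ v ∈ σᶜ, (α * ((ℓ:ℝ) + 1)⁻¹) * ((((d-ℓ).choose (k-ℓ) : ℕ) : ℝ) *
        (((∑ τ ∈ X.restLoc f (insert v σ) v, X.topCount d (insert v σ ∪ τ) : ℕ) : ℝ) +
          ∑ u ∈ σ, ((∑ τ ∈ X.restLoc f (insert v σ) u, X.topCount d (insert v σ ∪ τ) : ℕ) : ℝ))) =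
        (α * ((ℓ:ℝ) + 1)⁻¹) * ((((d-ℓ).choose (k-ℓ) : ℕ) : ℝ) *
          ((((d - k : ℕ) : ℝ)) * ((∑ τ ∈ X.loc f σ, X.topCount d (σ ∪ τ) : ℕ) : ℝ) +
            (((k-ℓ:ℕ):ℝ) + 2) * ((∑ u ∈ σ, ∑ τ ∈ X.restLoc f σ u, X.topCount d (σ ∪ τ) : ℕ) : ℝ))) := by
      rw [← Finset.mul_sum]
      congr 1
      rw [← Finset.mul_sum]
      congr 1
      rw [Finset.sum_add_distrib]
      congr 1
      · rw [← Nat.cast_sum, natD]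
        norm_cast
      · rw [Finset.sum_comm]
        have hper : ∀ u ∈ σ,
            (∑ v ∈ σᶜ, ((∑ τ ∈ X.restLoc f (insert v σ) u, X.topCount d (insert v σ ∪ τ) : ℕ) : ℝ))
              = (((k-ℓ:ℕ):ℝ) + 2) * ((∑ τ ∈ X.restLoc f σ u, X.topCount d (σ ∪ τ) : ℕ) : ℝ) := by
          intro u hu
          rw [← Nat.cast_sum, natB u hu]
          norm_cast
        rw [Finset.sum_congr rfl hper, ← Finset.mul_sum, ← Nat.cast_sum]
    rw [lhsEq, rhsEq] at SUM
    -- now pure algebra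
    set A : ℝ := ((∑ τ ∈ X.loc f σ, X.topCount d (σ ∪ τ) : ℕ) : ℝ) with hA
    set Bs : ℝ := ((∑ u ∈ σ, ∑ τ ∈ X.restLoc f σ u, X.topCount d (σ ∪ τ) : ℕ) : ℝ) with hBs
    have hA0 : 0 ≤ A := by rw [hA]; positivity
    have hBs0 : 0 ≤ Bs := by rw [hBs]; positivity
    have hL : (0:ℝ) < (ℓ:ℝ) := by exact_mod_cast hℓ
    have hLα : (0:ℝ) < (ℓ:ℝ) + 1 - α := by linarith
    have hC1 : (0:ℝ) < ((((d-ℓ)+1).choose ((k-ℓ)+1) : ℕ) : ℝ) := by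
      exact_mod_cast Nat.choose_pos (by omega)
    have hC2 : (0:ℝ) < ((((d-ℓ)+1).choose ((k-ℓ)+2) : ℕ) : ℝ) := by
      exact_mod_cast Nat.choose_pos (by omega)
    have id1 : ((((d-ℓ)+1).choose ((k-ℓ)+1) : ℕ) : ℝ) * (((k-ℓ:ℕ):ℝ) + 1) = (((d-ℓ:ℕ):ℝ) + 1) * (((d-ℓ).choose (k-ℓ) : ℕ) : ℝ) := by
      have := Nat.add_one_mul_choose_eq (d-ℓ) (k-ℓ)
      exact_mod_cast congrArg (Nat.cast (R := ℝ)) this.symm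
    have id2 : ((((d-ℓ)+1).choose ((k-ℓ)+2) : ℕ) : ℝ) * (((k-ℓ:ℕ):ℝ) + 2) = (((d-ℓ:ℕ):ℝ) + 1) * (((d-ℓ).choose ((k-ℓ)+1) : ℕ) : ℝ) := by
      have := Nat.add_one_mul_choose_eq (d-ℓ) ((k-ℓ)+1)
      exact_mod_cast congrArg (Nat.cast (R := ℝ)) this.symm
    have id3 : ((((d-ℓ)+1).choose ((k-ℓ)+1) : ℕ) : ℝ) * (((d - k : ℕ)) : ℝ) = ((((d-ℓ)+1).choose ((k-ℓ)+2) : ℕ) : ℝ) * (((k-ℓ:ℕ):ℝ) + 2) := by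
      have h := Nat.choose_succ_right_eq ((d-ℓ)+1) ((k-ℓ)+1)
      have hek : (d-ℓ) + 1 - ((k-ℓ) + 1) = d - k := by omega
      rw [hek] at h
      exact_mod_cast congrArg (Nat.cast (R := ℝ)) h.symm
    -- step: multiply SUM by ((d-ℓ)+1)
    have step : ((((d-ℓ)+1).choose ((k-ℓ)+2) : ℕ) : ℝ) * (((k-ℓ:ℕ):ℝ)+2) * ((((k-ℓ:ℕ):ℝ)+1) * A) ≤
        (α * ((ℓ:ℝ) + 1)⁻¹) * (((((d-ℓ)+1).choose ((k-ℓ)+1) : ℕ) : ℝ) * (((k-ℓ:ℕ):ℝ)+1)) *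
          ((((d - k : ℕ)) : ℝ) * A + (((k-ℓ:ℕ):ℝ)+2) * Bs) := by
      rw [id2, id1]
      calc (((d-ℓ:ℕ):ℝ) + 1) * (((d-ℓ).choose ((k-ℓ)+1) : ℕ) : ℝ) * ((((k-ℓ:ℕ):ℝ)+1) * A)
          = (((d-ℓ:ℕ):ℝ) + 1) * ((((d-ℓ).choose ((k-ℓ)+1) : ℕ) : ℝ) * ((((k-ℓ:ℕ):ℝ)+1) * A)) := by ring
        _ ≤ (((d-ℓ:ℕ):ℝ) + 1) * ((α * ((ℓ:ℝ) + 1)⁻¹) * ((((d-ℓ).choose (k-ℓ) : ℕ) : ℝ) *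
            ((((d - k : ℕ)) : ℝ) * A + (((k-ℓ:ℕ):ℝ)+2) * Bs))) :=
          mul_le_mul_of_nonneg_left SUM (by positivity)
        _ = (α * ((ℓ:ℝ) + 1)⁻¹) * ((((d-ℓ:ℕ):ℝ) + 1) * (((d-ℓ).choose (k-ℓ) : ℕ) : ℝ)) *
            ((((d - k : ℕ)) : ℝ) * A + (((k-ℓ:ℕ):ℝ)+2) * Bs) := by ring
    have step2 : ((((d-ℓ)+1).choose ((k-ℓ)+2) : ℕ) : ℝ) * (((k-ℓ:ℕ):ℝ)+2) * ((((k-ℓ:ℕ):ℝ)+1) * A) ≤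
        (α * ((ℓ:ℝ) + 1)⁻¹) * (((((d-ℓ)+1).choose ((k-ℓ)+2) : ℕ) : ℝ) * (((k-ℓ:ℕ):ℝ)+2) * ((((k-ℓ:ℕ):ℝ)+1) * A))
          + (α * ((ℓ:ℝ) + 1)⁻¹) * ((((d-ℓ)+1).choose ((k-ℓ)+1) : ℕ) : ℝ) * (((k-ℓ:ℕ):ℝ)+1) * (((k-ℓ:ℕ):ℝ)+2) * Bs := by
      calc ((((d-ℓ)+1).choose ((k-ℓ)+2) : ℕ) : ℝ) * (((k-ℓ:ℕ):ℝ)+2) * ((((k-ℓ:ℕ):ℝ)+1) * A)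
          ≤ (α * ((ℓ:ℝ) + 1)⁻¹) * (((((d-ℓ)+1).choose ((k-ℓ)+1) : ℕ) : ℝ) * (((k-ℓ:ℕ):ℝ)+1)) *
            ((((d - k : ℕ)) : ℝ) * A + (((k-ℓ:ℕ):ℝ)+2) * Bs) := step
        _ = (α * ((ℓ:ℝ) + 1)⁻¹) * (((((d-ℓ)+1).choose ((k-ℓ)+1) : ℕ) : ℝ) * (((d - k : ℕ)) : ℝ)) * ((((k-ℓ:ℕ):ℝ)+1) * A)
            + (α * ((ℓ:ℝ) + 1)⁻¹) * ((((d-ℓ)+1).choose ((k-ℓ)+1) : ℕ) : ℝ) * (((k-ℓ:ℕ):ℝ)+1) * (((k-ℓ:ℕ):ℝ)+2) * Bs := by ring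
        _ = _ := by rw [id3]; ring
    have hw : (0:ℝ) < (((k-ℓ:ℕ):ℝ)+1) * (((k-ℓ:ℕ):ℝ)+2) := by positivity
    have h4 : ((((d-ℓ)+1).choose ((k-ℓ)+2) : ℕ) : ℝ) * A ≤
        (α * ((ℓ:ℝ) + 1)⁻¹) * (((((d-ℓ)+1).choose ((k-ℓ)+2) : ℕ) : ℝ) * A)
          + (α * ((ℓ:ℝ) + 1)⁻¹) * (((((d-ℓ)+1).choose ((k-ℓ)+1) : ℕ) : ℝ) * Bs) := by
      apply le_of_mul_le_mul_left _ hw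
      calc (((k-ℓ:ℕ):ℝ)+1) * (((k-ℓ:ℕ):ℝ)+2) * (((((d-ℓ)+1).choose ((k-ℓ)+2) : ℕ) : ℝ) * A)
          = ((((d-ℓ)+1).choose ((k-ℓ)+2) : ℕ) : ℝ) * (((k-ℓ:ℕ):ℝ)+2) * ((((k-ℓ:ℕ):ℝ)+1) * A) := by ring
        _ ≤ (α * ((ℓ:ℝ) + 1)⁻¹) * (((((d-ℓ)+1).choose ((k-ℓ)+2) : ℕ) : ℝ) * (((k-ℓ:ℕ):ℝ)+2) * ((((k-ℓ:ℕ):ℝ)+1) * A))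
            + (α * ((ℓ:ℝ) + 1)⁻¹) * ((((d-ℓ)+1).choose ((k-ℓ)+1) : ℕ) : ℝ) * (((k-ℓ:ℕ):ℝ)+1) * (((k-ℓ:ℕ):ℝ)+2) * Bs := step2
        _ = (((k-ℓ:ℕ):ℝ)+1) * (((k-ℓ:ℕ):ℝ)+2) * ((α * ((ℓ:ℝ) + 1)⁻¹) * (((((d-ℓ)+1).choose ((k-ℓ)+2) : ℕ) : ℝ) * A)
            + (α * ((ℓ:ℝ) + 1)⁻¹) * (((((d-ℓ)+1).choose ((k-ℓ)+1) : ℕ) : ℝ) * Bs)) := by ring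
    have hc' : ((ℓ:ℝ) + 1) * (α * ((ℓ:ℝ) + 1)⁻¹) = α := by
      field_simp
    have KEY : ((ℓ:ℝ) + 1 - α) * (((((d-ℓ)+1).choose ((k-ℓ)+2) : ℕ) : ℝ) * A) ≤
        α * (((((d-ℓ)+1).choose ((k-ℓ)+1) : ℕ) : ℝ) * Bs) := by
      have h5 := mul_le_mul_of_nonneg_left h4 (show (0:ℝ) ≤ (ℓ:ℝ) + 1 by linarith)
      have h6 : ((ℓ:ℝ) + 1) * ((α * ((ℓ:ℝ) + 1)⁻¹) * (((((d-ℓ)+1).choose ((k-ℓ)+2) : ℕ) : ℝ) * A)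
          + (α * ((ℓ:ℝ) + 1)⁻¹) * (((((d-ℓ)+1).choose ((k-ℓ)+1) : ℕ) : ℝ) * Bs))
          = α * (((((d-ℓ)+1).choose ((k-ℓ)+2) : ℕ) : ℝ) * A) + α * (((((d-ℓ)+1).choose ((k-ℓ)+1) : ℕ) : ℝ) * Bs) := by
        have hl0 : ((ℓ:ℝ) + 1) ≠ 0 := by positivity
        field_simp
      rw [h6] at h5
      nlinarith [h5]
    -- endgame
    rw [show (k-ℓ) + 1 + 1 = (k-ℓ) + 2 from rfl]
    have hrhs : α * (ℓ:ℝ) / ((ℓ:ℝ) + 1 - α) * (((ℓ:ℝ))⁻¹ *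
        (Bs / (((((d-ℓ)+1).choose ((k-ℓ)+2) : ℕ) : ℝ) * (X.topCount d σ : ℝ)))) =
        (α * Bs) / (((ℓ:ℝ) + 1 - α) * (((((d-ℓ)+1).choose ((k-ℓ)+2) : ℕ) : ℝ) * (X.topCount d σ : ℝ))) := by
      field_simp
    rw [hrhs, div_le_div_iff₀ (mul_pos hC1 hNR) (mul_pos hLα (mul_pos hC2 hNR))]
    nlinarith [mul_le_mul_of_nonneg_right KEY hNR.le]
end

section
/- If a k-cochain f is 1-double balanced (perfectly double balanced) in dimension ℓ, then f is 1-double balanced in every dimension ℓ' < ℓ. -/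
open Finset

/-!
Perfect balance descends one dimension at a time. For an `ℓ`-face `σ`, sum the balance
inequalities of the `(ℓ+1)`-faces `σ ∪ {v}` over all vertices `v ∉ σ`. Double counting turns the
left-hand sides into `k - ℓ` copies of the weight of `f_σ`, and the right-hand sides into `d - k`
copies of the same weight (the terms with `u = v`) plus `k + 1 - ℓ` copies of the weights of the
`(f_{σ∖u})^u`, `u ∈ σ`. After normalising by the binomial coefficients, the terms with `u = v`
contribute exactly one extra copy of `‖f_σ‖`; cancelling it against the left-hand side leaves the
balance inequality for `σ`.
-/

theorem Finset.sum_compl_sum_filter_insert_subset {V M : Type*} [DecidableEq V] [Fintype V]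
    [AddCommMonoid M] (σ : Finset V) (S : Finset (Finset V)) (g : Finset V → M) :
    ∑ v ∈ σᶜ, ∑ ρ ∈ S with insert v σ ⊆ ρ, g ρ = ∑ ρ ∈ S with σ ⊆ ρ, #(ρ \ σ) • g ρ := by
  simp_rw [sum_filter]
  rw [sum_comm]
  refine sum_congr rfl fun ρ _ => ?_
  split_ifs with hσρ
  · rw [← sum_filter, ← sum_const]
    congr 1
    ext v
    simp [insert_subset_iff, hσρ, and_comm]
  · exact sum_eq_zero fun v _ => if_neg fun h => hσρ ((subset_insert v σ).trans h)

theorem Finset.sum_filter_disjoint_union {V M : Type*} [DecidableEq V] [Fintype V]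
    [AddCommMonoid M] (σ : Finset V) (p : Finset V → Prop) [DecidablePred p]
    (g : Finset V → M) :
    ∑ τ with Disjoint τ σ ∧ p (σ ∪ τ), g (σ ∪ τ) = ∑ ρ with σ ⊆ ρ ∧ p ρ, g ρ := by
  refine sum_nbij' (σ ∪ ·) (· \ σ) ?_ ?_ ?_ ?_ (fun _ _ => rfl) <;>
    simp only [mem_filter, mem_univ, true_and]
  · exact fun τ hτ => ⟨subset_union_left, hτ.2⟩
  · exact fun ρ hρ => ⟨sdiff_disjoint, by rw [union_sdiff_of_subset hρ.1]; exact hρ.2⟩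
  · exact fun τ hτ => union_sdiff_cancel_left hτ.1.symm
  · exact fun ρ hρ => union_sdiff_of_subset hρ.1

-- The normalisation at an `m`-face, where `L` and `P` are the weights, `i + 1 = k - m` and
-- `e = d - k`; `h` is the sum of the balance inequalities of the `(m+1)`-faces above it.
theorem div_choose_le_inv_mul_div_choose {L P : ℝ} (hL : 0 ≤ L) (hP : 0 ≤ P) (m i e : ℕ)
    (h : (i + 1) * L / (i + e).choose i ≤
      ((m : ℝ) + 2)⁻¹ * ((e * L + (i + 2) * P) / (i + e).choose (i + 1))) :
    L / (i + 1 + e).choose (i + 1) ≤ ((m : ℝ) + 1)⁻¹ * (P / (i + 1 + e).choose (i + 2)) := by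
  rcases e.eq_zero_or_pos with rfl | he
  · -- the right-hand side of `h` is a division by zero
    have hL0 : L = 0 := by
      simp only [add_zero, Nat.choose_self, Nat.choose_succ_self, Nat.cast_one, div_one,
        Nat.cast_zero, div_zero, mul_zero] at h
      nlinarith
    rw [hL0, zero_div]
    positivity
  have hC₁ : (0 : ℝ) < (i + 1 + e).choose (i + 1) := by exact_mod_cast Nat.choose_pos (by omega)
  have hC₂ : (0 : ℝ) < (i + 1 + e).choose (i + 2) := by exact_mod_cast Nat.choose_pos (by omega)
  have hD₁ : (0 : ℝ) < (i + e).choose i := by exact_mod_cast Nat.choose_pos (by omega)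
  have hD₂ : (0 : ℝ) < (i + e).choose (i + 1) := by exact_mod_cast Nat.choose_pos (by omega)
  have hsucc : i + e + 1 = i + 1 + e := by ring
  have r₁ : ((i + 1 + e : ℕ) : ℝ) * (i + e).choose i =
      (i + 1 + e).choose (i + 1) * ((i : ℝ) + 1) := by
    exact_mod_cast hsucc ▸ Nat.add_one_mul_choose_eq (i + e) i
  have r₂ : ((i + 1 + e : ℕ) : ℝ) * (i + e).choose (i + 1) =
      (i + 1 + e).choose (i + 2) * ((i : ℝ) + 2) := by
    exact_mod_cast hsucc ▸ Nat.add_one_mul_choose_eq (i + e) (i + 1)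
  have r₃ : ((i + e).choose (i + 1) : ℝ) * (i + 1 + e : ℕ) =
      (i + 1 + e).choose (i + 1) * (e : ℝ) := by
    have := hsucc ▸ Nat.choose_mul_succ_eq (i + e) (i + 1)
    rw [show i + 1 + e - (i + 1) = e by omega] at this
    exact_mod_cast this
  set n : ℝ := ((i + 1 + e : ℕ) : ℝ)
  set C₁ : ℝ := Nat.cast ((i + 1 + e).choose (i + 1))
  set C₂ : ℝ := Nat.cast ((i + 1 + e).choose (i + 2))
  set D₁ : ℝ := Nat.cast ((i + e).choose i)
  set D₂ : ℝ := Nat.cast ((i + e).choose (i + 1))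
  have h₁ : (i + 1) * L / D₁ = n * L / C₁ := by
    rw [div_eq_div_iff hD₁.ne' hC₁.ne']
    linear_combination (-L) * r₁
  have h₂ : (e * L + (i + 2) * P) / D₂ = n * L / C₁ + n * P / C₂ := by
    rw [div_add_div _ _ hC₁.ne' hC₂.ne', div_eq_div_iff hD₂.ne' (by positivity)]
    linear_combination (-L * C₂) * r₃ + (-P * C₁) * r₂
  rw [h₁, h₂, le_inv_mul_iff₀ (by positivity), mul_div_assoc, mul_div_assoc] at h
  rw [le_inv_mul_iff₀ (by positivity)]
  have hn : 0 < n := by positivity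
  refine le_of_mul_le_mul_left ?_ hn
  linarith

namespace SC

variable {V : Type*} [DecidableEq V] (X : SC V) {d k : ℕ} {f : Finset (Finset V)}

theorem topCount_eq_card_filter_kFaces (d : ℕ) (σ : Finset V) :
    X.topCount d σ = #{Δ ∈ X.kFaces d | σ ⊆ Δ} := by
  rw [topCount, kFaces, filter_filter]

theorem topCount_eq_zero_of_subset {σ ρ : Finset V} (hσ : σ ∉ X.faces) (hσρ : σ ⊆ ρ) :
    X.topCount d ρ = 0 := by
  rw [topCount, card_eq_zero, filter_eq_empty_iff]
  exact fun Δ hΔ h => hσ (X.downClosed Δ hΔ σ (hσρ.trans h.2))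

theorem topCount_pos (hpure : X.Pure d) {σ : Finset V} (hσ : σ ∈ X.faces) :
    0 < X.topCount d σ := by
  obtain ⟨Δ, hΔ, hσΔ, hcard⟩ := hpure.2.2 σ hσ
  exact card_pos.mpr ⟨Δ, mem_filter.mpr ⟨hΔ, hcard, hσΔ⟩⟩

theorem mem_faces_of_topCount_ne_zero {ρ : Finset V} (h : X.topCount d ρ ≠ 0) : ρ ∈ X.faces :=
  not_not.mp fun hρ => h (X.topCount_eq_zero_of_subset hρ subset_rfl)

-- Unnormalised `‖f_σ‖` and `‖(f_{σ∖u})^u‖`, indexed by the face `ρ = σ ∪ τ` of `X` instead of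
-- the face `τ` of the link (see `sum_loc_topCount` and `sum_restLoc_topCount`).
def locWeight (d : ℕ) (f : Finset (Finset V)) (σ : Finset V) : ℕ :=
  ∑ ρ ∈ f with σ ⊆ ρ, X.topCount d ρ

def restWeight (d : ℕ) (f : Finset (Finset V)) (σ : Finset V) (u : V) : ℕ :=
  ∑ ρ ∈ X.faces with ρ.erase u ∈ f ∧ σ ⊆ ρ, X.topCount d ρ

theorem locWeight_eq_zero {σ : Finset V} (hσ : σ ∉ X.faces) : X.locWeight d f σ = 0 :=
  sum_eq_zero fun _ hρ => X.topCount_eq_zero_of_subset hσ (mem_filter.mp hρ).2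

theorem restWeight_eq_zero {σ : Finset V} (hσ : σ ∉ X.faces) (u : V) :
    X.restWeight d f σ u = 0 :=
  sum_eq_zero fun _ hρ => X.topCount_eq_zero_of_subset hσ (mem_filter.mp hρ).2.2

theorem restWeight_insert_self {σ : Finset V} {v : V} (hv : v ∉ σ) :
    X.restWeight d f (insert v σ) v =
      ∑ ρ ∈ f with σ ⊆ ρ ∧ v ∉ ρ, X.topCount d (insert v ρ) := by
  symm
  refine sum_bij_ne_zero (fun ρ _ _ => insert v ρ) ?_ ?_ ?_ (fun _ _ _ => rfl)
  · intro ρ hρ hne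
    obtain ⟨hρf, hσρ, hvρ⟩ := mem_filter.mp hρ
    refine mem_filter.mpr ⟨X.mem_faces_of_topCount_ne_zero hne, ?_, insert_subset_insert v hσρ⟩
    rwa [erase_insert hvρ]
  · intro ρ₁ hρ₁ _ ρ₂ hρ₂ _ h
    rw [← erase_insert (mem_filter.mp hρ₁).2.2, h, erase_insert (mem_filter.mp hρ₂).2.2]
  · intro ρ hρ hne
    obtain ⟨-, hρf, hσρ⟩ := mem_filter.mp hρ
    have hvρ : insert v (ρ.erase v) = ρ := insert_erase (hσρ (mem_insert_self v σ))
    refine ⟨ρ.erase v, mem_filter.mpr ⟨hρf, ?_, notMem_erase v ρ⟩, by rwa [hvρ], hvρ⟩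
    exact subset_erase.mpr ⟨(subset_insert v σ).trans hσρ, hv⟩

variable [Fintype V]

theorem sum_topCount_insert (d : ℕ) (ρ : Finset V) :
    ∑ v ∈ ρᶜ, X.topCount d (insert v ρ) = (d + 1 - #ρ) * X.topCount d ρ := by
  simp_rw [topCount_eq_card_filter_kFaces, card_eq_sum_ones (s := filter _ _),
    sum_compl_sum_filter_insert_subset, mul_sum, smul_eq_mul, mul_one]
  refine sum_congr rfl fun Δ hΔ => ?_
  obtain ⟨hΔ, hρΔ⟩ := mem_filter.mp hΔ
  rw [card_sdiff_of_subset hρΔ, (mem_filter.mp hΔ).2]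

theorem sum_loc_topCount (d : ℕ) (f : Finset (Finset V)) (σ : Finset V) :
    ∑ τ ∈ X.loc f σ, X.topCount d (σ ∪ τ) = X.locWeight d f σ := by
  rw [loc, sum_filter_disjoint_union, locWeight]
  congr 1
  ext ρ
  simp [and_comm]

theorem sum_restLoc_topCount (d : ℕ) (f : Finset (Finset V)) {σ : Finset V} {u : V}
    (hu : u ∈ σ) :
    ∑ τ ∈ X.restLoc f σ u, X.topCount d (σ ∪ τ) = X.restWeight d f σ u := by
  have hrestLoc : X.restLoc f σ u =
      univ.filter fun τ => Disjoint τ σ ∧ (σ ∪ τ ∈ X.faces ∧ (σ ∪ τ).erase u ∈ f) := by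
    refine filter_congr fun τ _ => and_congr_right fun hτ => ?_
    rw [erase_union_distrib, erase_eq_of_notMem (disjoint_right.mp hτ hu)]
  rw [hrestLoc, sum_filter_disjoint_union σ fun ρ => ρ ∈ X.faces ∧ ρ.erase u ∈ f, restWeight]
  congr 1
  ext ρ
  simp only [mem_filter, mem_univ, true_and]
  tauto

theorem sum_locWeight_insert (hf : f ⊆ X.kFaces k) (σ : Finset V) :
    ∑ v ∈ σᶜ, X.locWeight d f (insert v σ) = (k + 1 - #σ) * X.locWeight d f σ := by
  simp only [locWeight]
  rw [sum_compl_sum_filter_insert_subset, mul_sum]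
  refine sum_congr rfl fun ρ hρ => ?_
  obtain ⟨hρf, hσρ⟩ := mem_filter.mp hρ
  rw [card_sdiff_of_subset hσρ, (mem_filter.mp (hf hρf)).2, smul_eq_mul]

theorem sum_restWeight_insert_of_mem (hf : f ⊆ X.kFaces k) {σ : Finset V} {u : V}
    (hu : u ∈ σ) :
    ∑ v ∈ σᶜ, X.restWeight d f (insert v σ) u = (k + 2 - #σ) * X.restWeight d f σ u := by
  simp only [restWeight, ← filter_filter]
  rw [sum_compl_sum_filter_insert_subset, mul_sum]
  refine sum_congr rfl fun ρ hρ => ?_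
  obtain ⟨hρ, hσρ⟩ := mem_filter.mp hρ
  have hcard : #(ρ.erase u) = k + 1 := (mem_filter.mp (hf (mem_filter.mp hρ).2)).2
  rw [card_erase_of_mem (hσρ hu)] at hcard
  rw [card_sdiff_of_subset hσρ, smul_eq_mul]
  congr 1
  omega

theorem sum_restWeight_insert_self (hf : f ⊆ X.kFaces k) (σ : Finset V) :
    ∑ v ∈ σᶜ, X.restWeight d f (insert v σ) v = (d - k) * X.locWeight d f σ := by
  rw [sum_congr rfl fun v hv => X.restWeight_insert_self (mem_compl.mp hv)]
  have hswap : ∀ v ρ,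
      v ∈ σᶜ ∧ ρ ∈ {ρ ∈ f | σ ⊆ ρ ∧ v ∉ ρ} ↔ v ∈ ρᶜ ∧ ρ ∈ {ρ ∈ f | σ ⊆ ρ} := by
    simp only [mem_compl, mem_filter]
    exact fun v ρ => ⟨fun ⟨_, hρ, hσρ, hvρ⟩ => ⟨hvρ, hρ, hσρ⟩,
      fun ⟨hvρ, hρ, hσρ⟩ => ⟨fun hv => hvρ (hσρ hv), hρ, hσρ, hvρ⟩⟩
  rw [sum_comm' hswap, locWeight, mul_sum]
  refine sum_congr rfl fun ρ hρ => ?_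
  rw [sum_topCount_insert, (mem_filter.mp (hf (mem_filter.mp hρ).1)).2, Nat.add_sub_add_right]

theorem sum_sum_restWeight_insert (hf : f ⊆ X.kFaces k) (σ : Finset V) :
    ∑ v ∈ σᶜ, ∑ u ∈ insert v σ, X.restWeight d f (insert v σ) u =
      (d - k) * X.locWeight d f σ + (k + 2 - #σ) * ∑ u ∈ σ, X.restWeight d f σ u := by
  rw [sum_congr rfl fun v hv => sum_insert (mem_compl.mp hv), sum_add_distrib,
    X.sum_restWeight_insert_self hf, sum_comm, mul_sum]
  congr 1
  exact sum_congr rfl fun u hu => X.sum_restWeight_insert_of_mem hf hu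

theorem doubleBalanced_iff (hpure : X.Pure d) {ℓ : ℕ} {α : ℝ} :
    X.DoubleBalanced d k f α ℓ ↔ ∀ σ ∈ X.kFaces ℓ,
      (X.locWeight d f σ : ℝ) / (d - ℓ).choose (k - ℓ) ≤
        α * (((ℓ : ℝ) + 1)⁻¹ *
          ((∑ u ∈ σ, X.restWeight d f σ u : ℕ) / (d - ℓ).choose (k - ℓ + 1))) := by
  refine forall₂_congr fun σ hσ => ?_
  obtain ⟨hσX, hcard⟩ := mem_filter.mp hσ
  have hT : (0 : ℝ) < X.topCount d σ := by exact_mod_cast X.topCount_pos hpure hσX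
  have hnorm : ∀ c S, X.linkNorm d σ c S =
      (∑ τ ∈ S, X.topCount d (σ ∪ τ) : ℕ) / (d - ℓ).choose c / X.topCount d σ := by
    intro c S
    rw [linkNorm, hcard, Nat.add_sub_add_right, Nat.cast_sum, div_div]
  rw [hnorm, sum_loc_topCount, sum_congr rfl fun u hu => by
    rw [hnorm, sum_restLoc_topCount X d f hu], ← sum_div, ← sum_div, ← Nat.cast_sum, hcard,
    Nat.cast_add_one, ← mul_div_assoc, ← mul_div_assoc, div_le_div_iff_of_pos_right hT]

theorem doubleBalanced_one_of_succ (hpure : X.Pure d) (hf : f ⊆ X.kFaces k) {m : ℕ}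
    (hmk : m + 1 ≤ k) (hkd : k ≤ d) (h : X.DoubleBalanced d k f 1 (m + 1)) :
    X.DoubleBalanced d k f 1 m := by
  rw [doubleBalanced_iff X hpure] at h ⊢
  intro σ hσ
  obtain ⟨i, e, hk, hd⟩ : ∃ i e, k = m + 1 + i ∧ d = k + e :=
    ⟨k - (m + 1), d - k, by omega, by omega⟩
  simp only [show d - (m + 1) = i + e by omega, show k - (m + 1) = i by omega,
    show d - m = i + 1 + e by omega, show k - m = i + 1 by omega, one_mul] at h ⊢
  have hcard : #σ = m + 1 := (mem_filter.mp hσ).2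
  have hlink : ∀ v ∈ σᶜ, (X.locWeight d f (insert v σ) : ℝ) / (i + e).choose i ≤
      ((m : ℝ) + 2)⁻¹ * ((∑ u ∈ insert v σ, X.restWeight d f (insert v σ) u : ℕ) /
        (i + e).choose (i + 1)) := by
    intro v hv
    by_cases hvσ : insert v σ ∈ X.faces
    · have hcard' : #(insert v σ) = m + 1 + 1 := by
        rw [card_insert_of_notMem (mem_compl.mp hv), hcard]
      simpa only [Nat.cast_add_one, add_assoc, one_add_one_eq_two] using
        h (insert v σ) (mem_filter.mpr ⟨hvσ, hcard'⟩)
    · simp [X.locWeight_eq_zero hvσ, X.restWeight_eq_zero hvσ]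
  have hsum := sum_le_sum hlink
  rw [← sum_div, ← mul_sum, ← sum_div, ← Nat.cast_sum, ← Nat.cast_sum,
    X.sum_locWeight_insert hf, X.sum_sum_restWeight_insert hf, hcard,
    show k + 1 - (m + 1) = i + 1 by omega, show k + 2 - (m + 1) = i + 2 by omega,
    show d - k = e by omega] at hsum
  exact div_choose_le_inv_mul_div_choose (by positivity) (by positivity) m i e
    (by exact_mod_cast hsum)

end SC

/-- **Perfect double balance is inherited without loss**: if a set `f` of `k`-faces of a
pure `d`-dimensional complex is `1`-double balanced in dimension `ℓ`, then it is
`1`-double balanced in every dimension `ℓ' < ℓ`. -/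
theorem perfect_double_balance_inheritance {V : Type*} [DecidableEq V] [Fintype V]
    (X : SC V) (d k ℓ : ℕ) (hpure : X.Pure d) (hℓk : ℓ < k) (hkd : k ≤ d)
    (f : Finset (Finset V)) (hf : f ⊆ X.kFaces k)
    (hdb : X.DoubleBalanced d k f 1 ℓ) :
    ∀ ℓ' < ℓ, X.DoubleBalanced d k f 1 ℓ' := by
  intro ℓ' hℓ'
  exact Nat.decreasingInduction (motive := fun m _ => X.DoubleBalanced d k f 1 m)
    (fun m hm hsucc => X.doubleBalanced_one_of_succ hpure hf (by omega) hkd hsucc) hdb hℓ'.le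
end

section
/- Let f be a set of k-faces of a d-dimensional simplicial complex X (1 ≤ k < d), and for 0 ≤ i ≤ k+2 let δ_i(f) denote the set of (k+1)-faces containing exactly i k-faces of f. Then the sum over (k−1)-faces σ of the mutual weight ‖(δ_1(f_σ), σ)‖ equals Σ_{i=1}^{k+1} [i(k+2−i)/C(k+2,2)]·‖δ_i(f)‖, where f_σ is the localization of f to the link of σ and δ_1(f_σ) is computed in the link X_σ. -/
open Finset

section Helpers

open SC

variable {V : Type*} [DecidableEq V]

lemma exists_insert_of_card_succ {σ τ : Finset V} {k : ℕ}
    (hσ : σ.card = k) (hτ : τ.card = k + 1) (hsub : σ ⊆ τ) :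
    ∃ c ∉ σ, τ = insert c σ := by
  have h1 : (τ \ σ).card = 1 := by rw [card_sdiff_of_subset hsub, hτ, hσ]; omega
  obtain ⟨c, hc⟩ := card_eq_one.mp h1
  have hcm : c ∈ τ \ σ := hc ▸ mem_singleton_self c
  rw [mem_sdiff] at hcm
  refine ⟨c, hcm.2, Subset.antisymm ?_ ?_⟩
  · intro x hx
    by_cases hxσ : x ∈ σ
    · exact mem_insert_of_mem hxσ
    · have : x ∈ τ \ σ := mem_sdiff.mpr ⟨hx, hxσ⟩
      rw [hc, mem_singleton] at this; simp [this]
  · intro x hx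
    rcases mem_insert.mp hx with h | h
    · exact h ▸ hcm.1
    · exact hsub h

lemma union_inter_of_ne {ρ τ1 τ2 : Finset V} {k : ℕ}
    (hρ : ρ.card = k + 2) (h1 : τ1 ⊆ ρ) (h2 : τ2 ⊆ ρ) (hc1 : τ1.card = k + 1)
    (hc2 : τ2.card = k + 1) (hne : τ1 ≠ τ2) :
    τ1 ∪ τ2 = ρ ∧ (τ1 ∩ τ2).card = k := by
  have hcap : (τ1 ∩ τ2).card ≤ k := by
    by_contra h
    push_neg at h
    have e1 : τ1 ∩ τ2 = τ1 :=
      eq_of_subset_of_card_le inter_subset_left (by omega)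
    have e2 : τ1 ∩ τ2 = τ2 :=
      eq_of_subset_of_card_le inter_subset_right (by omega)
    exact hne (e1 ▸ e2)
  have hui := card_union_add_card_inter τ1 τ2
  have hu : τ1 ∪ τ2 = ρ := by
    apply Subset.antisymm (union_subset h1 h2)
    have : ρ.card ≤ (τ1 ∪ τ2).card := by omega
    rw [eq_of_subset_of_card_le (union_subset h1 h2) this]
  constructor
  · exact hu
  · rw [hu] at hui; omega

/-- Structure of a pair of distinct `(k+1)`-subsets of a `(k+2)`-set. -/
lemma pair_structure {ρ τ1 τ2 : Finset V} {k : ℕ}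
    (hρ : ρ.card = k + 2) (h1 : τ1 ⊆ ρ) (h2 : τ2 ⊆ ρ) (hc1 : τ1.card = k + 1)
    (hc2 : τ2.card = k + 1) (hne : τ1 ≠ τ2) :
    ∃ a b, a ≠ b ∧ a ∉ τ1 ∩ τ2 ∧ b ∉ τ1 ∩ τ2 ∧ τ1 = insert a (τ1 ∩ τ2) ∧
      τ2 = insert b (τ1 ∩ τ2) ∧ ρ \ (τ1 ∩ τ2) = {a, b} ∧ (τ1 ∩ τ2).card = k := by
  obtain ⟨hu, hcap⟩ := union_inter_of_ne hρ h1 h2 hc1 hc2 hne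
  obtain ⟨a, ha, hτ1⟩ := exists_insert_of_card_succ hcap hc1 inter_subset_left
  obtain ⟨b, hb, hτ2⟩ := exists_insert_of_card_succ hcap hc2 inter_subset_right
  have hab : a ≠ b := by
    rintro rfl
    exact hne (hτ1.trans hτ2.symm)
  have haρ : a ∈ ρ := h1 (hτ1 ▸ mem_insert_self a _)
  have hbρ : b ∈ ρ := h2 (hτ2 ▸ mem_insert_self b _)
  have hsubρ : τ1 ∩ τ2 ⊆ ρ := inter_subset_left.trans h1
  have hsd : (ρ \ (τ1 ∩ τ2)).card = 2 := by
    rw [card_sdiff_of_subset hsubρ, hρ, hcap]; omega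
  have hpair : ({a, b} : Finset V) ⊆ ρ \ (τ1 ∩ τ2) := by
    intro x hx
    rcases mem_insert.mp hx with rfl | hx
    · exact mem_sdiff.mpr ⟨haρ, ha⟩
    · rw [mem_singleton] at hx
      exact hx ▸ mem_sdiff.mpr ⟨hbρ, hb⟩
  have hsd2 : ρ \ (τ1 ∩ τ2) = {a, b} := by
    refine (eq_of_subset_of_card_le hpair ?_).symm
    rw [card_pair hab]; omega
  exact ⟨a, b, hab, ha, hb, hτ1, hτ2, hsd2, hcap⟩

variable [Fintype V]

lemma loc_inter (X : SC V) (f : Finset (Finset V)) (ρ σ : Finset V) :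
    (ρ \ σ) ∩ X.locV f σ = (ρ \ σ).filter (fun v => insert v σ ∈ f) := by
  ext v
  simp only [mem_inter, mem_sdiff, mem_filter, SC.locV, mem_univ, true_and]
  tauto

/-- The core counting claim: the number of `k`-subsets of a `(k+2)`-face `ρ` such that
exactly one of the two `(k+1)`-subsets of `ρ` above it lies in `f` is `i (k+2-i)`. -/
lemma core_count (X : SC V) (k : ℕ) (f : Finset (Finset V)) (ρ : Finset V)
    (hρ : ρ.card = k + 2) :
    ((ρ.powersetCard k).filter
        (fun σ => ((ρ \ σ) ∩ X.locV f σ).card = 1)).card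
      = ((ρ.powersetCard (k + 1)).filter (· ∈ f)).card
        * (k + 2 - ((ρ.powersetCard (k + 1)).filter (· ∈ f)).card) := by
  classical
  set A := (ρ.powersetCard (k + 1)).filter (· ∈ f) with hA
  set B := (ρ.powersetCard (k + 1)).filter (fun τ => ¬ τ ∈ f) with hB
  have hP : (ρ.powersetCard (k + 1)).card = k + 2 := by
    rw [card_powersetCard, hρ, Nat.choose_succ_self_right]
  have hABcard : A.card + B.card = k + 2 := by
    rw [hA, hB, ← hP]
    exact card_filter_add_card_filter_not _
  have hbij : (A ×ˢ B).card =
      ((ρ.powersetCard k).filter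
        (fun σ => ((ρ \ σ) ∩ X.locV f σ).card = 1)).card := by
    apply card_bij (fun p _ => p.1 ∩ p.2)
    · rintro ⟨τ1, τ2⟩ hp
      rw [mem_product] at hp
      dsimp only at hp
      obtain ⟨hp1, hp2⟩ := hp
      rw [hA, mem_filter, mem_powersetCard] at hp1
      rw [hB, mem_filter, mem_powersetCard] at hp2
      obtain ⟨⟨hs1, hc1⟩, hf1⟩ := hp1
      obtain ⟨⟨hs2, hc2⟩, hf2⟩ := hp2
      have hne : τ1 ≠ τ2 := fun h => hf2 (h ▸ hf1)
      obtain ⟨a, b, hab, ha, hb, hτ1, hτ2, hsd, hcap⟩ :=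
        pair_structure hρ hs1 hs2 hc1 hc2 hne
      rw [mem_filter, mem_powersetCard]
      refine ⟨⟨inter_subset_left.trans hs1, hcap⟩, ?_⟩
      rw [loc_inter, hsd]
      have : ({a, b} : Finset V).filter
          (fun v => insert v (τ1 ∩ τ2) ∈ f) = {a} := by
        ext x
        simp only [mem_filter, mem_insert, mem_singleton]
        constructor
        · rintro ⟨rfl | rfl, hxf⟩
          · rfl
          · exact absurd (hτ2 ▸ hxf) hf2
        · rintro rfl
          exact ⟨Or.inl rfl, hτ1 ▸ hf1⟩
      rw [this, card_singleton]
    · rintro ⟨τ1, τ2⟩ hp ⟨τ1', τ2'⟩ hp' heq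
      rw [mem_product] at hp hp'
      dsimp only at hp hp'
      obtain ⟨hp1, hp2⟩ := hp
      obtain ⟨hp1', hp2'⟩ := hp'
      rw [hA, mem_filter, mem_powersetCard] at hp1 hp1'
      rw [hB, mem_filter, mem_powersetCard] at hp2 hp2'
      obtain ⟨⟨hs1, hc1⟩, hf1⟩ := hp1
      obtain ⟨⟨hs2, hc2⟩, hf2⟩ := hp2
      obtain ⟨⟨hs1', hc1'⟩, hf1'⟩ := hp1'
      obtain ⟨⟨hs2', hc2'⟩, hf2'⟩ := hp2'
      have hne : τ1 ≠ τ2 := fun h => hf2 (h ▸ hf1)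
      have hne' : τ1' ≠ τ2' := fun h => hf2' (h ▸ hf1')
      obtain ⟨a, b, hab, ha, hb, hτ1, hτ2, hsd, hcap⟩ :=
        pair_structure hρ hs1 hs2 hc1 hc2 hne
      obtain ⟨a', b', hab', ha', hb', hτ1', hτ2', hsd', hcap'⟩ :=
        pair_structure hρ hs1' hs2' hc1' hc2' hne'
      dsimp only at heq
      rw [heq] at hτ1 hτ2 hsd
      have hmem : ∀ x : V, x ∈ ({a, b} : Finset V) → x ∈ ({a', b'} : Finset V) := by
        rw [← hsd, ← hsd']; exact fun x h => h
      have hmem' : ∀ x : V, x ∈ ({a', b'} : Finset V) → x ∈ ({a, b} : Finset V) := by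
        rw [← hsd, ← hsd']; exact fun x h => h
      have haa : a = a' := by
        have := hmem a (mem_insert_self a _)
        rcases mem_insert.mp this with h | h
        · exact h
        · rw [mem_singleton] at h
          exfalso
          apply hf2'
          rw [hτ2', ← h, ← hτ1]
          exact hf1
      have hbb : b = b' := by
        have := hmem b (mem_insert_of_mem (mem_singleton_self b))
        rcases mem_insert.mp this with h | h
        · exfalso
          apply hf2
          rw [hτ2, h, ← hτ1']
          exact hf1'
        · rw [mem_singleton] at h; exact h
      have e1 : τ1 = τ1' := by rw [hτ1, haa, ← hτ1']
      have e2 : τ2 = τ2' := by rw [hτ2, hbb, ← hτ2']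
      rw [Prod.mk.injEq]
      exact ⟨e1, e2⟩
    · intro σ hσ
      rw [mem_filter, mem_powersetCard] at hσ
      obtain ⟨⟨hσρ, hσc⟩, hcond⟩ := hσ
      rw [loc_inter] at hcond
      obtain ⟨a, ha⟩ := card_eq_one.mp hcond
      have haf : a ∈ (ρ \ σ).filter (fun v => insert v σ ∈ f) :=
        ha ▸ mem_singleton_self a
      rw [mem_filter, mem_sdiff] at haf
      obtain ⟨⟨haρ, haσ⟩, haf⟩ := haf
      have hsdc : (ρ \ σ).card = 2 := by rw [card_sdiff_of_subset hσρ, hρ, hσc]; omega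
      have hb1 : ((ρ \ σ) \ {a}).card = 1 := by
        rw [card_sdiff_of_subset (by simpa using mem_sdiff.mpr ⟨haρ, haσ⟩), hsdc, card_singleton]
      obtain ⟨b, hb⟩ := card_eq_one.mp hb1
      have hbm : b ∈ (ρ \ σ) \ {a} := hb ▸ mem_singleton_self b
      rw [mem_sdiff, mem_sdiff, mem_singleton] at hbm
      obtain ⟨⟨hbρ, hbσ⟩, hba⟩ := hbm
      have hbf : insert b σ ∉ f := by
        intro hbf
        have : b ∈ ((ρ \ σ).filter (fun v => insert v σ ∈ f)) :=
          mem_filter.mpr ⟨mem_sdiff.mpr ⟨hbρ, hbσ⟩, hbf⟩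
        rw [ha, mem_singleton] at this
        exact hba this
      refine ⟨(insert a σ, insert b σ), ?_, ?_⟩
      · rw [mem_product, hA, hB, mem_filter, mem_filter, mem_powersetCard,
          mem_powersetCard]
        refine ⟨⟨⟨insert_subset haρ hσρ, ?_⟩, haf⟩,
          ⟨insert_subset hbρ hσρ, ?_⟩, hbf⟩
        · rw [card_insert_of_notMem haσ, hσc]
        · rw [card_insert_of_notMem hbσ, hσc]
      · dsimp only
        ext x
        simp only [mem_inter, mem_insert]
        constructor
        · rintro ⟨rfl | hx, h2⟩
          · rcases h2 with h2 | h2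
            · exact absurd h2.symm hba
            · exact absurd h2 haσ
          · exact hx
        · exact fun hx => ⟨Or.inr hx, Or.inr hx⟩
  have hBc : B.card = k + 2 - A.card := by omega
  rw [← hbij, card_product, hBc]

lemma key_reindex (X : SC V) (d k : ℕ) (hk : 1 ≤ k) (f : Finset (Finset V)) :
    ∑ σ ∈ X.kFaces (k - 1), ∑ e ∈ X.linkDelta σ 1 f, (X.topCount d (σ ∪ e) : ℝ)
      = ∑ ρ ∈ X.kFaces (k + 1),
          (((ρ.powersetCard k).filter
            (fun σ => ((ρ \ σ) ∩ X.locV f σ).card = 1)).card : ℝ)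
            * (X.topCount d ρ : ℝ) := by
  have hR : ∀ ρ : Finset V,
      (((ρ.powersetCard k).filter
        (fun σ => ((ρ \ σ) ∩ X.locV f σ).card = 1)).card : ℝ) * (X.topCount d ρ : ℝ)
        = ∑ _σ ∈ (ρ.powersetCard k).filter
            (fun σ => ((ρ \ σ) ∩ X.locV f σ).card = 1), (X.topCount d ρ : ℝ) := by
    intro ρ; rw [sum_const, nsmul_eq_mul]
  rw [Finset.sum_congr rfl (fun ρ _ => hR ρ), Finset.sum_sigma', Finset.sum_sigma']
  refine Finset.sum_nbij' (fun p => ⟨p.1 ∪ p.2, p.1⟩) (fun q => ⟨q.2, q.1 \ q.2⟩)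
    ?_ ?_ ?_ ?_ ?_
  · rintro ⟨σ, e⟩ hp
    rw [mem_sigma] at hp
    dsimp only at hp ⊢
    obtain ⟨hσ, he⟩ := hp
    rw [SC.kFaces, mem_filter] at hσ
    obtain ⟨hσf, hσc⟩ := hσ
    rw [SC.linkDelta, mem_filter, SC.linkFacesC, mem_filter] at he
    obtain ⟨⟨-, hd, hue, hec⟩, hcond⟩ := he
    have hdisj : Disjoint σ e := hd.symm
    rw [mem_sigma]
    dsimp only
    constructor
    · rw [SC.kFaces, mem_filter]
      refine ⟨hue, ?_⟩
      rw [card_union_of_disjoint hdisj, hσc, hec]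
      omega
    · rw [mem_filter, mem_powersetCard]
      refine ⟨⟨subset_union_left, by omega⟩, ?_⟩
      rw [union_sdiff_cancel_left hdisj]
      exact hcond
  · rintro ⟨ρ, σ⟩ hq
    rw [mem_sigma] at hq
    dsimp only at hq ⊢
    obtain ⟨hρ, hσ⟩ := hq
    rw [SC.kFaces, mem_filter] at hρ
    obtain ⟨hρf, hρc⟩ := hρ
    rw [mem_filter, mem_powersetCard] at hσ
    obtain ⟨⟨hσρ, hσc⟩, hcond⟩ := hσ
    rw [mem_sigma]
    dsimp only
    constructor
    · rw [SC.kFaces, mem_filter]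
      exact ⟨X.downClosed ρ hρf σ hσρ, by omega⟩
    · rw [SC.linkDelta, mem_filter, SC.linkFacesC, mem_filter]
      refine ⟨⟨mem_univ _, sdiff_disjoint, ?_, ?_⟩, hcond⟩
      · rw [union_sdiff_of_subset hσρ]; exact hρf
      · rw [card_sdiff_of_subset hσρ]; omega
  · rintro ⟨σ, e⟩ hp
    rw [mem_sigma] at hp
    obtain ⟨-, he⟩ := hp
    rw [SC.linkDelta, mem_filter, SC.linkFacesC, mem_filter] at he
    obtain ⟨⟨-, hd, -, -⟩, -⟩ := he
    exact Sigma.ext rfl (heq_of_eq (union_sdiff_cancel_left hd.symm))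
  · rintro ⟨ρ, σ⟩ hq
    rw [mem_sigma] at hq
    obtain ⟨-, hσ⟩ := hq
    rw [mem_filter, mem_powersetCard] at hσ
    exact Sigma.ext (union_sdiff_of_subset hσ.1.1) (HEq.refl _)
  · rintro ⟨σ, e⟩ -
    rfl

lemma key_fiber (X : SC V) (d k : ℕ) (f : Finset (Finset V)) :
    ∑ ρ ∈ X.kFaces (k + 1),
      ((((ρ.powersetCard (k + 1)).filter (· ∈ f)).card
          * (k + 2 - ((ρ.powersetCard (k + 1)).filter (· ∈ f)).card) : ℕ) : ℝ)
        * (X.topCount d ρ : ℝ)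
      = ∑ i ∈ Finset.Icc 1 (k + 1), ((i * (k + 2 - i) : ℕ) : ℝ)
          * ∑ ρ ∈ X.deltaI k i f, (X.topCount d ρ : ℝ) := by
  classical
  have hmap : ∀ ρ ∈ X.kFaces (k + 1),
      ((ρ.powersetCard (k + 1)).filter (· ∈ f)).card ∈ Finset.range (k + 3) := by
    intro ρ hρ
    rw [SC.kFaces, mem_filter] at hρ
    have h1 : ((ρ.powersetCard (k + 1)).filter (· ∈ f)).card
        ≤ (ρ.powersetCard (k + 1)).card := card_filter_le _ _
    rw [card_powersetCard, hρ.2, Nat.choose_succ_self_right] at h1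
    rw [mem_range]; omega
  rw [← Finset.sum_fiberwise_of_maps_to hmap]
  have hterm : ∀ i ∈ Finset.range (k + 3),
      ∑ ρ ∈ (X.kFaces (k + 1)).filter
          (fun ρ => ((ρ.powersetCard (k + 1)).filter (· ∈ f)).card = i),
        ((((ρ.powersetCard (k + 1)).filter (· ∈ f)).card
          * (k + 2 - ((ρ.powersetCard (k + 1)).filter (· ∈ f)).card) : ℕ) : ℝ)
          * (X.topCount d ρ : ℝ)
      = ((i * (k + 2 - i) : ℕ) : ℝ) * ∑ ρ ∈ X.deltaI k i f, (X.topCount d ρ : ℝ) := by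
    intro i _
    rw [SC.deltaI, Finset.mul_sum]
    apply Finset.sum_congr rfl
    intro ρ hρ
    rw [mem_filter] at hρ
    rw [hρ.2]
  rw [Finset.sum_congr rfl hterm]
  refine (Finset.sum_subset ?_ ?_).symm
  · intro i hi
    rw [mem_Icc] at hi
    rw [mem_range]
    omega
  · intro i hi hni
    rw [mem_range] at hi
    rw [mem_Icc] at hni
    have : i * (k + 2 - i) = 0 := by
      rcases Nat.eq_zero_or_pos i with rfl | hpos
      · simp
      · have hik : i = k + 2 := by omega
        rw [hik]
        simp
    rw [this]
    simp

end Helpers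

/-- Double-counting identity (equation (3) of Lemma 4.3): summing the mutual weight of
`δ₁(f_σ)` over all `(k−1)`-faces `σ` equals `Σ_{i=1}^{k+1} i(k+2−i)/C(k+2,2) · ‖δᵢ(f)‖`. -/
theorem delta1_link_double_counting {V : Type*} [DecidableEq V] [Fintype V]
    (X : SC V) (d k : ℕ) (hpure : X.Pure d) (hk : 1 ≤ k) (hkd : k < d)
    (f : Finset (Finset V)) (hf : f ⊆ X.kFaces k) :
    ∑ σ ∈ X.kFaces (k - 1), X.mutualWeight d (k + 2) σ (X.linkDelta σ 1 f) =
      ∑ i ∈ Finset.Icc 1 (k + 1),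
        ((i * (k + 2 - i) : ℕ) : ℝ) / ((k + 2).choose 2 : ℝ) *
          X.linkNorm d ∅ (k + 2) (X.deltaI k i f) := by
  classical
  have hchoose : (k + 2).choose k = (k + 2).choose 2 := by
    simpa using Nat.choose_symm (show 2 ≤ k + 2 by omega)
  have hL : ∀ σ ∈ X.kFaces (k - 1),
      X.mutualWeight d (k + 2) σ (X.linkDelta σ 1 f)
        = (∑ e ∈ X.linkDelta σ 1 f, (X.topCount d (σ ∪ e) : ℝ))
            / (((d + 1).choose (k + 2) : ℝ) * ((k + 2).choose 2 : ℝ)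
                * (X.topCount d ∅ : ℝ)) := by
    intro σ hσ
    have hσc : σ.card = k := by
      rw [SC.kFaces, mem_filter] at hσ
      omega
    simp only [SC.mutualWeight, hσc, hchoose]
    exact (Finset.sum_div _ _ _).symm
  have hN : ∀ S : Finset (Finset V),
      X.linkNorm d ∅ (k + 2) S
        = (∑ ρ ∈ S, (X.topCount d ρ : ℝ))
            / (((d + 1).choose (k + 2) : ℝ) * (X.topCount d ∅ : ℝ)) := by
    intro S
    simp [SC.linkNorm]
  rw [Finset.sum_congr rfl hL, ← Finset.sum_div, key_reindex X d k hk f]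
  have hcore : ∀ ρ ∈ X.kFaces (k + 1), (((ρ.powersetCard k).filter
      (fun σ => ((ρ \ σ) ∩ X.locV f σ).card = 1)).card : ℝ) * (X.topCount d ρ : ℝ)
      = ((((ρ.powersetCard (k + 1)).filter (· ∈ f)).card
          * (k + 2 - ((ρ.powersetCard (k + 1)).filter (· ∈ f)).card) : ℕ) : ℝ)
          * (X.topCount d ρ : ℝ) := by
    intro ρ hρ
    have hρc : ρ.card = k + 2 := by rw [SC.kFaces, mem_filter] at hρ; omega
    rw [core_count X k f ρ hρc]
  rw [Finset.sum_congr rfl hcore, key_fiber X d k f, Finset.sum_div]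
  apply Finset.sum_congr rfl
  intro i _
  rw [hN]
  ring
end

section
/- With notation as before, the sum over (k−1)-faces σ of ‖(δ_2(f_σ), σ)‖ equals Σ_{i=2}^{k+2} [C(i,2)/C(k+2,2)]·‖δ_i(f)‖, where δ_2(f_σ) is the set of edges of the link X_σ with both endpoints in the vertex set f_σ. -/
open Finset

/-- Double-counting identity (equation (4) of Lemma 4.3): summing the mutual weight of
`δ₂(f_σ)` over all `(k−1)`-faces `σ` equals `Σ_{i=2}^{k+2} C(i,2)/C(k+2,2) · ‖δᵢ(f)‖`. -/
theorem delta2_link_double_counting {V : Type*} [DecidableEq V] [Fintype V]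
    (X : SC V) (d k : ℕ) (hpure : X.Pure d) (hk : 1 ≤ k) (hkd : k < d)
    (f : Finset (Finset V)) (hf : f ⊆ X.kFaces k) :
    ∑ σ ∈ X.kFaces (k - 1), X.mutualWeight d (k + 2) σ (X.linkDelta σ 2 f) =
      ∑ i ∈ Finset.Icc 2 (k + 2),
        ((i.choose 2 : ℕ) : ℝ) / ((k + 2).choose 2 : ℝ) *
          X.linkNorm d ∅ (k + 2) (X.deltaI k i f) := by
  classical
  have hMW : ∀ σ ∈ X.kFaces (k - 1),
      X.mutualWeight d (k + 2) σ (X.linkDelta σ 2 f) =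
        (∑ e ∈ X.linkDelta σ 2 f, (X.topCount d (σ ∪ e) : ℝ)) /
          (((k + 2).choose 2 : ℝ) * (((d + 1).choose (k + 2) : ℝ) * (X.topCount d ∅ : ℝ))) := by
    intro σ hσ
    have hσc : σ.card = k := by
      simp only [SC.kFaces, mem_filter] at hσ; omega
    have hch : (k + 2).choose k = (k + 2).choose 2 := by
      have h := Nat.choose_symm (show 2 ≤ k + 2 by omega)
      simpa using h
    unfold SC.mutualWeight
    rw [← Finset.sum_div, hσc, hch]
    congr 1
    ring
  have hLN : ∀ S : Finset (Finset V), X.linkNorm d ∅ (k + 2) S =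
      (∑ τ ∈ S, (X.topCount d τ : ℝ)) /
        (((d + 1).choose (k + 2) : ℝ) * (X.topCount d ∅ : ℝ)) := by
    intro S; simp [SC.linkNorm]
  rw [Finset.sum_congr rfl hMW, ← Finset.sum_div]
  have hR : ∀ i ∈ Finset.Icc 2 (k + 2),
      ((i.choose 2 : ℕ) : ℝ) / ((k + 2).choose 2 : ℝ) *
          X.linkNorm d ∅ (k + 2) (X.deltaI k i f) =
        ((i.choose 2 : ℝ) * ∑ τ ∈ X.deltaI k i f, (X.topCount d τ : ℝ)) /
          (((k + 2).choose 2 : ℝ) * (((d + 1).choose (k + 2) : ℝ) * (X.topCount d ∅ : ℝ))) := by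
    intro i _
    rw [hLN, div_mul_div_comm]
  rw [Finset.sum_congr rfl hR, ← Finset.sum_div]
  congr 1
  -- the two-element helper
  have other_aux : ∀ {e : Finset V} {v : V}, e.card = 2 → v ∈ e →
      ∃ u ∈ e, u ≠ v ∧ e.erase v = {u} := by
    intro e v he hv
    have h1 : (e.erase v).card = 1 := by rw [Finset.card_erase_of_mem hv, he]
    obtain ⟨u, hu⟩ := Finset.card_eq_one.mp h1
    have humem : u ∈ e.erase v := hu ▸ Finset.mem_singleton_self u
    exact ⟨u, Finset.mem_of_mem_erase humem, Finset.ne_of_mem_erase humem, hu⟩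
  -- step 1: reindex (σ, e) ↦ (σ ∪ e, e)
  have key1 : ∑ σ ∈ X.kFaces (k - 1), ∑ e ∈ X.linkDelta σ 2 f, (X.topCount d (σ ∪ e) : ℝ)
      = ∑ ρ ∈ X.kFaces (k + 1),
          ∑ _e ∈ (ρ.filter fun w => ρ.erase w ∈ f).powersetCard 2, (X.topCount d ρ : ℝ) := by
    rw [Finset.sum_sigma', Finset.sum_sigma']
    refine Finset.sum_nbij' (fun p => ⟨p.1 ∪ p.2, p.2⟩) (fun p => ⟨p.1 \ p.2, p.2⟩)
      ?_ ?_ ?_ ?_ ?_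
    · rintro ⟨σ, e⟩ hp
      rw [Finset.mem_sigma] at hp
      obtain ⟨hσ, he⟩ := hp
      simp only [SC.kFaces, mem_filter] at hσ
      obtain ⟨hσf, hσc⟩ := hσ
      have hσk : σ.card = k := by omega
      simp only [SC.linkDelta, SC.linkFacesC, mem_filter, mem_univ, true_and] at he
      obtain ⟨⟨hdisj, hmem, he2⟩, hcnt⟩ := he
      have hsub : e ⊆ X.locV f σ := by
        have h1 : e ∩ X.locV f σ = e :=
          Finset.eq_of_subset_of_card_le Finset.inter_subset_left (by omega)
        exact Finset.inter_eq_left.mp h1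
      rw [Finset.mem_sigma]
      constructor
      · simp only [SC.kFaces, mem_filter]
        refine ⟨hmem, ?_⟩
        rw [Finset.card_union_of_disjoint hdisj.symm]
        omega
      · rw [Finset.mem_powersetCard]
        refine ⟨?_, he2⟩
        intro v hv
        obtain ⟨u, hue, huv, herase⟩ := other_aux he2 hv
        have hvσ : v ∉ σ := Finset.disjoint_left.mp hdisj hv
        have heq : (σ ∪ e).erase v = insert u σ := by
          rw [Finset.erase_union_distrib, Finset.erase_eq_of_notMem hvσ, herase,
            Finset.union_comm, ← Finset.insert_eq]
        rw [Finset.mem_filter]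
        refine ⟨Finset.mem_union_right _ hv, ?_⟩
        rw [heq]
        have := hsub hue
        simp only [SC.locV, mem_filter, mem_univ, true_and] at this
        exact this.2
    · rintro ⟨ρ, e⟩ hp
      rw [Finset.mem_sigma] at hp
      obtain ⟨hρ, he⟩ := hp
      simp only [SC.kFaces, mem_filter] at hρ
      obtain ⟨hρf, hρc⟩ := hρ
      rw [Finset.mem_powersetCard] at he
      obtain ⟨heF, he2⟩ := he
      have heρ : e ⊆ ρ := heF.trans (Finset.filter_subset _ _)
      rw [Finset.mem_sigma]
      have hcard : (ρ \ e).card = k := by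
        rw [Finset.card_sdiff_of_subset heρ, hρc, he2]
        omega
      have hunion : ρ \ e ∪ e = ρ := Finset.sdiff_union_of_subset heρ
      constructor
      · simp only [SC.kFaces, mem_filter]
        exact ⟨X.downClosed ρ hρf _ (Finset.sdiff_subset), by omega⟩
      · simp only [SC.linkDelta, SC.linkFacesC, mem_filter, mem_univ, true_and]
        have hdisj : Disjoint e (ρ \ e) := Finset.sdiff_disjoint.symm
        refine ⟨⟨hdisj, by rw [hunion]; exact hρf, he2⟩, ?_⟩
        have hsub : e ⊆ X.locV f (ρ \ e) := by
          intro v hv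
          obtain ⟨u, hue, huv, herase⟩ := other_aux he2 hv
          have hvρ : v ∈ ρ := heρ hv
          have he' : e = insert v {u} := by rw [← Finset.insert_erase hv, herase]
          have hins : insert v (ρ \ e) = ρ.erase u := by
            ext x
            simp only [Finset.mem_insert, Finset.mem_sdiff, he', Finset.mem_singleton,
              Finset.mem_erase]
            constructor
            · rintro (rfl | ⟨hxρ, hx⟩)
              · exact ⟨huv.symm, hvρ⟩
              · exact ⟨fun h => hx (Or.inr h), hxρ⟩
            · rintro ⟨hxu, hxρ⟩
              by_cases hx : x = v
              · exact Or.inl hx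
              · exact Or.inr ⟨hxρ, fun h => h.elim hx hxu⟩
          have hu : ρ.erase u ∈ f := (Finset.mem_filter.mp (heF hue)).2
          simp only [SC.locV, mem_filter, mem_univ, true_and]
          refine ⟨fun h => (Finset.mem_sdiff.mp h).2 hv, ?_⟩
          rw [hins]; exact hu
        have h1 : e ∩ X.locV f (ρ \ e) = e := Finset.inter_eq_left.mpr hsub
        rw [h1, he2]
    · rintro ⟨σ, e⟩ hp
      rw [Finset.mem_sigma] at hp
      simp only [SC.linkDelta, SC.linkFacesC, mem_filter, mem_univ, true_and] at hp
      have hdisj : Disjoint e σ := hp.2.1.1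
      have : (σ ∪ e) \ e = σ := by
        rw [Finset.union_sdiff_distrib, Finset.sdiff_self, Finset.union_empty,
          Finset.sdiff_eq_self_of_disjoint hdisj.symm]
      simp [this]
    · rintro ⟨ρ, e⟩ hp
      rw [Finset.mem_sigma] at hp
      have heρ : e ⊆ ρ := (Finset.mem_powersetCard.mp hp.2).1.trans (Finset.filter_subset _ _)
      simp [Finset.sdiff_union_of_subset heρ]
    · rintro ⟨σ, e⟩ _; rfl
  rw [key1]
  -- step 2: inner sum is a binomial count
  have key2 : ∀ ρ ∈ X.kFaces (k + 1),
      (ρ.filter fun w => ρ.erase w ∈ f).card = ((ρ.powersetCard (k + 1)).filter (· ∈ f)).card := by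
    intro ρ hρ
    have hρc : ρ.card = k + 2 := by
      simp only [SC.kFaces, mem_filter] at hρ; omega
    refine Finset.card_bij (fun w _ => ρ.erase w) ?_ ?_ ?_
    · intro w hw
      rw [Finset.mem_filter] at hw ⊢
      rw [Finset.mem_powersetCard]
      exact ⟨⟨Finset.erase_subset _ _, by rw [Finset.card_erase_of_mem hw.1, hρc]; omega⟩, hw.2⟩
    · intro w hw w' hw' heq
      rw [Finset.mem_filter] at hw hw'
      by_contra hne
      have heq' : ρ.erase w = ρ.erase w' := heq
      have : w ∈ ρ.erase w' := Finset.mem_erase.mpr ⟨hne, hw.1⟩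
      rw [← heq'] at this
      exact (Finset.mem_erase.mp this).1 rfl
    · intro τ hτ
      rw [Finset.mem_filter, Finset.mem_powersetCard] at hτ
      obtain ⟨⟨hτρ, hτc⟩, hτf⟩ := hτ
      have h1 : (ρ \ τ).card = 1 := by rw [Finset.card_sdiff_of_subset hτρ]; omega
      obtain ⟨w, hw⟩ := Finset.card_eq_one.mp h1
      have hwρ : w ∈ ρ := (Finset.mem_sdiff.mp (hw ▸ Finset.mem_singleton_self w)).1
      have herase : ρ.erase w = τ := by
        rw [Finset.erase_eq, ← hw, Finset.sdiff_sdiff_self_left,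
          Finset.inter_eq_right.mpr hτρ]
      refine ⟨w, Finset.mem_filter.mpr ⟨hwρ, by rw [herase]; exact hτf⟩, herase⟩
  -- step 3: fiberwise grouping
  have hmaps : ∀ ρ ∈ X.kFaces (k + 1),
      ((ρ.powersetCard (k + 1)).filter (· ∈ f)).card ∈ Finset.range (k + 3) := by
    intro ρ hρ
    have hρc : ρ.card = k + 2 := by
      simp only [SC.kFaces, mem_filter] at hρ; omega
    have h1 : ((ρ.powersetCard (k + 1)).filter (· ∈ f)).card ≤ (ρ.powersetCard (k + 1)).card :=
      Finset.card_filter_le _ _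
    rw [Finset.card_powersetCard, hρc] at h1
    have h2 : (k + 2).choose (k + 1) = k + 2 := by
      rw [← Nat.choose_symm (by omega : k + 1 ≤ k + 2)]
      simp
    rw [Finset.mem_range]
    omega
  have step : ∀ i : ℕ,
      ∑ ρ ∈ (X.kFaces (k + 1)).filter
          (fun ρ => ((ρ.powersetCard (k + 1)).filter (· ∈ f)).card = i),
        ((((ρ.powersetCard (k + 1)).filter (· ∈ f)).card.choose 2 : ℕ) : ℝ) *
          (X.topCount d ρ : ℝ)
      = ((i.choose 2 : ℕ) : ℝ) * ∑ τ ∈ X.deltaI k i f, (X.topCount d τ : ℝ) := by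
    intro i
    rw [Finset.mul_sum]
    simp only [SC.deltaI]
    refine Finset.sum_congr rfl fun ρ hρ => ?_
    rw [(Finset.mem_filter.mp hρ).2]
  have key3 : ∑ ρ ∈ X.kFaces (k + 1),
        ((((ρ.powersetCard (k + 1)).filter (· ∈ f)).card.choose 2 : ℕ) : ℝ) *
          (X.topCount d ρ : ℝ)
      = ∑ i ∈ Finset.Icc 2 (k + 2),
          ((i.choose 2 : ℕ) : ℝ) * ∑ τ ∈ X.deltaI k i f, (X.topCount d τ : ℝ) := by
    rw [← Finset.sum_fiberwise_of_maps_to hmaps]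
    rw [Finset.sum_congr rfl fun i _ => step i]
    have hsub : Finset.Icc 2 (k + 2) ⊆ Finset.range (k + 3) := by
      intro i hi
      rw [Finset.mem_Icc] at hi
      rw [Finset.mem_range]
      omega
    refine (Finset.sum_subset hsub fun i hir hi => ?_).symm
    rw [Finset.mem_range] at hir
    rw [Finset.mem_Icc] at hi
    have h0 : i.choose 2 = 0 := Nat.choose_eq_zero_of_lt (by omega)
    rw [h0]
    simp
  rw [← key3]
  refine Finset.sum_congr rfl fun ρ hρ => ?_
  rw [Finset.sum_const, Finset.card_powersetCard, key2 ρ hρ, nsmul_eq_mul]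
end

section
/- Let X be a d-dimensional simplicial complex over 𝔽₂ such that the link of every nonempty face is a β-coboundary expander. Then for every ℓ < k < d, every locally minimal k-cocycle f (in particular every minimal representative of a k-cohomology class) is ((ℓ+1)/β)-double balanced in dimension ℓ: for every ℓ-face σ, ‖f_σ‖ ≤ ((ℓ+1)/β)·E_{v∈σ}‖(f_{σ∖v})^v‖. -/
open Finset

/-- The `n`-subsets of an `(n+1)`-set `ρ` lying in `f` are counted by the
elements `w ∈ ρ` with `ρ.erase w ∈ f`. -/
lemma erase_count_aux {V : Type*} [DecidableEq V] {n : ℕ} {ρ : Finset V}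
    (hρ : ρ.card = n + 1) (f : Finset (Finset V)) :
    (ρ.powersetCard n ∩ f).card = (ρ.filter fun w => ρ.erase w ∈ f).card := by
  symm
  apply Finset.card_bij (fun w _ => ρ.erase w)
  · intro w hw
    simp only [mem_filter] at hw
    simp only [mem_inter, mem_powersetCard]
    exact ⟨⟨erase_subset _ _, by rw [card_erase_of_mem hw.1, hρ]; rfl⟩, hw.2⟩
  · intro a ha b hb h
    simp only [mem_filter] at ha hb
    exact (Finset.erase_inj ρ ha.1).mp h
  · intro s hs
    simp only [mem_inter, mem_powersetCard] at hs
    obtain ⟨⟨hsub, hcard⟩, hsf⟩ := hs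
    have h1 : (ρ \ s).card = 1 := by
      rw [card_sdiff_of_subset hsub, hρ, hcard]; omega
    obtain ⟨w, hw⟩ := card_eq_one.mp h1
    have hwρ : w ∈ ρ := (mem_sdiff.mp (hw ▸ mem_singleton_self w)).1
    have hws : w ∉ s := (mem_sdiff.mp (hw ▸ mem_singleton_self w)).2
    have heq : ρ.erase w = s := by
      apply Finset.eq_of_subset_of_card_le
      · intro x hx
        rw [mem_erase] at hx
        by_contra hxs
        have : x ∈ ρ \ s := mem_sdiff.mpr ⟨hx.2, hxs⟩
        rw [hw, mem_singleton] at this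
        exact hx.1 this
      · rw [hcard, card_erase_of_mem hwρ, hρ]; omega
    exact ⟨w, by simp [mem_filter, hwρ, heq, hsf], heq⟩

/-- **Theorem 5.1 (Cohomologies are double balanced).** In a pure `d`-dimensional complex
whose links of nonempty faces are `β`-coboundary expanders, every locally minimal
`k`-cocycle (in particular every minimal representative of a `k`-cohomology class) is
`((ℓ+1)/β)`-double balanced in every dimension `ℓ < k`. -/
theorem cocycles_are_double_balanced {V : Type*} [DecidableEq V] [Fintype V]
    (X : SC V) (d k ℓ : ℕ) (β : ℝ) (hpure : X.Pure d) (hβ : 0 < β)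
    (hℓk : ℓ < k) (hkd : k < d)
    (hlinks : ∀ σ ∈ X.faces, σ ≠ ∅ → X.LinkCoboundaryExpander d β σ)
    (f : Finset (Finset V)) (hf : f ⊆ X.kFaces k)
    (hcoc : X.IsCocycle ∅ k f) (hmin : X.LocallyMinimal d k f) :
    X.DoubleBalanced d k f (((ℓ : ℝ) + 1) / β) ℓ := by
  intro σ hσ
  simp only [SC.kFaces, mem_filter] at hσ
  obtain ⟨hσF, hσcard⟩ := hσ
  have hσne : σ ≠ ∅ := by
    intro h; rw [h] at hσcard; simp at hσcard
  have h1 : k - (ℓ + 1) + 1 = k - ℓ := by omega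
  have h2 : k - (ℓ + 1) + 2 = k - ℓ + 1 := by omega
  -- the localization is a cochain of the link
  have hloc : X.loc f σ ⊆ X.linkFacesC σ (k - ℓ) := by
    intro τ hτ
    simp only [SC.loc, mem_filter, mem_univ, true_and] at hτ
    obtain ⟨hd, hτf⟩ := hτ
    have hmem := hf hτf
    simp only [SC.kFaces, mem_filter] at hmem
    refine mem_filter.mpr ⟨mem_univ _, hd, hmem.1, ?_⟩
    have hcu := card_union_of_disjoint hd.symm
    omega
  -- local minimality
  have hminσ := hmin σ hσF (by omega) (by omega)
  rw [hσcard] at hminσ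
  unfold SC.MinimalCochain at hminσ
  rw [h1] at hminσ
  -- coboundary expansion in the link
  have hexp := hlinks σ hσF hσne (k - (ℓ + 1)) (X.loc f σ) (by rw [h1]; exact hloc)
  rw [h1, h2, ← hminσ] at hexp
  -- covering claim: every face of the coboundary lies in some restLoc
  have key : ∀ τ ∈ X.cob σ (k - ℓ) (X.loc f σ), ∃ u ∈ σ, τ ∈ X.restLoc f σ u := by
    intro τ hτ
    simp only [SC.cob, mem_filter] at hτ
    obtain ⟨hτlink, hodd⟩ := hτ
    simp only [SC.linkFacesC, mem_filter, mem_univ, true_and] at hτlink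
    obtain ⟨hdisj, hface, hτcard⟩ := hτlink
    have hρcard : (σ ∪ τ).card = (k + 1) + 1 := by
      rw [card_union_of_disjoint hdisj.symm]; omega
    have hN := hcoc (σ ∪ τ) (by
      simp only [SC.linkFacesC, mem_filter, mem_univ, true_and]
      exact ⟨disjoint_empty_right _, by rwa [empty_union], by omega⟩)
    rw [erase_count_aux hρcard f, filter_union,
      card_union_of_disjoint (disjoint_filter_filter hdisj.symm)] at hN
    -- the τ-part of the count is odd
    have hB : (τ.filter fun w => (σ ∪ τ).erase w ∈ f).card
        = (τ.powersetCard (k - ℓ) ∩ X.loc f σ).card := by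
      rw [erase_count_aux (show τ.card = (k - ℓ) + 1 by omega) (X.loc f σ)]
      congr 1
      apply filter_congr
      intro w hw
      have hwσ : w ∉ σ := disjoint_left.mp hdisj hw
      rw [erase_union_distrib, erase_eq_of_notMem hwσ]
      simp only [SC.loc, mem_filter, mem_univ, true_and]
      constructor
      · intro h
        exact ⟨disjoint_of_subset_left (erase_subset _ _) hdisj, h⟩
      · intro h; exact h.2
    have hBodd : ¬ Even ((τ.filter fun w => (σ ∪ τ).erase w ∈ f).card) := by
      rw [hB]; exact hodd
    have hAodd : ¬ Even ((σ.filter fun w => (σ ∪ τ).erase w ∈ f).card) := by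
      intro hA
      exact hBodd ((Nat.even_add.mp hN).mp hA)
    have hApos : (σ.filter fun w => (σ ∪ τ).erase w ∈ f).Nonempty := by
      rw [← Finset.card_pos]
      rcases Nat.eq_zero_or_pos (σ.filter fun w => (σ ∪ τ).erase w ∈ f).card with h | h
      · exact absurd (h ▸ Even.zero) hAodd
      · exact h
    obtain ⟨u, hu⟩ := hApos
    simp only [mem_filter] at hu
    refine ⟨u, hu.1, ?_⟩
    have huτ : u ∉ τ := disjoint_right.mp hdisj hu.1
    have heq : (σ ∪ τ).erase u = σ.erase u ∪ τ := by
      rw [erase_union_distrib, erase_eq_of_notMem huτ]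
    simp only [SC.restLoc, mem_filter, mem_univ, true_and]
    exact ⟨hdisj, hface, heq ▸ hu.2⟩
  -- weight comparison
  have hsum : (∑ τ ∈ X.cob σ (k - ℓ) (X.loc f σ), (X.topCount d (σ ∪ τ) : ℝ))
      ≤ ∑ u ∈ σ, ∑ τ ∈ X.restLoc f σ u, (X.topCount d (σ ∪ τ) : ℝ) := by
    calc (∑ τ ∈ X.cob σ (k - ℓ) (X.loc f σ), (X.topCount d (σ ∪ τ) : ℝ))
        ≤ ∑ τ ∈ X.cob σ (k - ℓ) (X.loc f σ), ∑ u ∈ σ,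
            (if τ ∈ X.restLoc f σ u then (X.topCount d (σ ∪ τ) : ℝ) else 0) := by
          apply Finset.sum_le_sum
          intro τ hτ
          obtain ⟨u, hu, hres⟩ := key τ hτ
          calc (X.topCount d (σ ∪ τ) : ℝ)
              = if τ ∈ X.restLoc f σ u then (X.topCount d (σ ∪ τ) : ℝ) else 0 := by
                rw [if_pos hres]
            _ ≤ _ := Finset.single_le_sum (f := fun v =>
                if τ ∈ X.restLoc f σ v then (X.topCount d (σ ∪ τ) : ℝ) else 0)
                (fun v _ => by positivity) hu
      _ = ∑ u ∈ σ, ∑ τ ∈ X.cob σ (k - ℓ) (X.loc f σ),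
            (if τ ∈ X.restLoc f σ u then (X.topCount d (σ ∪ τ) : ℝ) else 0) :=
          Finset.sum_comm
      _ ≤ ∑ u ∈ σ, ∑ τ ∈ X.restLoc f σ u, (X.topCount d (σ ∪ τ) : ℝ) := by
          apply Finset.sum_le_sum
          intro u _
          rw [← Finset.sum_filter]
          exact Finset.sum_le_sum_of_subset_of_nonneg
            (fun τ hτ => (mem_filter.mp hτ).2)
            (fun τ _ _ => by positivity)
  -- from weights to norms
  have hcover : X.linkNorm d σ (k - ℓ + 1) (X.cob σ (k - ℓ) (X.loc f σ))
      ≤ ∑ u ∈ σ, X.linkNorm d σ (k - ℓ + 1) (X.restLoc f σ u) := by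
    unfold SC.linkNorm
    rw [← Finset.sum_div]
    set D : ℝ := ((d + 1 - σ.card).choose (k - ℓ + 1) : ℝ) * (X.topCount d σ : ℝ) with hD
    rcases eq_or_lt_of_le (show (0:ℝ) ≤ D from by positivity) with h0 | h0
    · rw [← h0]; simp
    · exact (div_le_div_iff_of_pos_right h0).mpr hsum
  have hS : β * X.linkNorm d σ (k - ℓ) (X.loc f σ)
      ≤ ∑ u ∈ σ, X.linkNorm d σ (k - ℓ + 1) (X.restLoc f σ u) := le_trans hexp hcover
  rw [hσcard]
  have hc1 : ((ℓ : ℝ) + 1) ≠ 0 := by positivity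
  have hrw : ((ℓ : ℝ) + 1) / β * ((((ℓ + 1 : ℕ) : ℝ))⁻¹ *
      ∑ u ∈ σ, X.linkNorm d σ (k - ℓ + 1) (X.restLoc f σ u))
      = (∑ u ∈ σ, X.linkNorm d σ (k - ℓ + 1) (X.restLoc f σ u)) / β := by
    push_cast
    field_simp
  rw [hrw, le_div_iff₀ hβ]
  linarith
end

section
/- For any 𝔽₂-cochain f on a simplicial complex with δ∘δ = 0: if f is a k-cocycle and σ an ℓ-face, then ‖δ(f_σ)‖ ≤ Σ_{v∈σ} ‖(f_{σ∖v})^v‖, where the weight ‖·‖ is taken in the link X_σ. -/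
open Finset

section Aux

variable {V : Type*} [DecidableEq V]

/-- Counting `n`-subsets of an `(n+1)`-set in `g` equals counting elements whose erase is
in `g`. -/
lemma card_powersetCard_inter (s : Finset V) (n : ℕ) (hs : s.card = n + 1)
    (g : Finset (Finset V)) :
    (s.powersetCard n ∩ g).card = (s.filter fun w => s.erase w ∈ g).card := by
  symm
  apply Finset.card_bij (fun w _ => s.erase w)
  · intro w hw
    rw [Finset.mem_filter] at hw
    rw [Finset.mem_inter, Finset.mem_powersetCard]
    exact ⟨⟨Finset.erase_subset _ _, by rw [Finset.card_erase_of_mem hw.1, hs]; omega⟩, hw.2⟩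
  · intro a ha b hb hab
    rw [Finset.mem_filter] at ha hb
    by_contra hne
    have : a ∈ s.erase b := Finset.mem_erase.2 ⟨hne, ha.1⟩
    rw [← hab] at this
    exact (Finset.notMem_erase a s) this
  · intro τ hτ
    rw [Finset.mem_inter, Finset.mem_powersetCard] at hτ
    obtain ⟨⟨hsub, hcard⟩, hg⟩ := hτ
    have hlt : τ.card < s.card := by omega
    obtain ⟨w, hws, hwτ⟩ : ∃ w ∈ s, w ∉ τ := by
      by_contra h
      push_neg at h
      have hts : s = τ := Finset.eq_of_subset_of_card_le (fun x hx => h x hx) hlt.le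
      rw [← hts] at hcard
      omega
    have heq : τ = s.erase w := by
      apply Finset.eq_of_subset_of_card_le
      · intro x hx
        exact Finset.mem_erase.2 ⟨fun h => hwτ (h ▸ hx), hsub hx⟩
      · rw [Finset.card_erase_of_mem hws, hs, hcard]; omega
    exact ⟨w, Finset.mem_filter.2 ⟨hws, heq ▸ hg⟩, heq.symm⟩

end Aux

/-- Pointwise step: every face of `δ(f_σ)` lies in `(f_{σ∖v})^v` for some `v ∈ σ`. -/
lemma mem_restLoc_of_mem_cob {V : Type*} [DecidableEq V] [Fintype V]
    (X : SC V) (k ℓ : ℕ) (hℓk : ℓ < k)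
    (f : Finset (Finset V)) (hcoc : X.IsCocycle ∅ k f)
    (σ : Finset V) (hσ : σ ∈ X.kFaces ℓ)
    (τ : Finset V) (hτ : τ ∈ X.cob σ (k - ℓ) (X.loc f σ)) :
    ∃ v ∈ σ, τ ∈ X.restLoc f σ v := by
  rw [SC.kFaces, Finset.mem_filter] at hσ
  obtain ⟨hσf, hσc⟩ := hσ
  rw [SC.cob, Finset.mem_filter, SC.linkFacesC, Finset.mem_filter] at hτ
  obtain ⟨⟨-, hdisj, hface, hτc⟩, hodd⟩ := hτ
  set ρ : Finset V := σ ∪ τ with hρ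
  have hρc : ρ.card = k + 2 := by
    rw [hρ, Finset.card_union_of_disjoint hdisj.symm]
    omega
  have heven : Even ((ρ.powersetCard (k + 1) ∩ f).card) := by
    apply hcoc
    rw [SC.linkFacesC, Finset.mem_filter]
    refine ⟨Finset.mem_univ _, Finset.disjoint_empty_right _, ?_, hρc⟩
    rwa [Finset.empty_union]
  rw [card_powersetCard_inter ρ (k + 1) hρc f] at heven
  have hsplit : ρ.filter (fun w => ρ.erase w ∈ f) =
      (σ.filter fun w => ρ.erase w ∈ f) ∪ (τ.filter fun w => ρ.erase w ∈ f) :=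
    Finset.filter_union _ _ _
  have hdisjf : Disjoint (σ.filter fun w => ρ.erase w ∈ f)
      (τ.filter fun w => ρ.erase w ∈ f) :=
    hdisj.symm.mono (Finset.filter_subset _ _) (Finset.filter_subset _ _)
  rw [hsplit, Finset.card_union_of_disjoint hdisjf] at heven
  -- the τ-part equals the odd count from the coboundary condition
  have hτpart : (τ.filter fun w => ρ.erase w ∈ f) =
      (τ.filter fun w => τ.erase w ∈ X.loc f σ) := by
    apply Finset.filter_congr
    intro w hw
    have hwσ : w ∉ σ := fun h => (Finset.disjoint_left.1 hdisj) hw h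
    have herase : ρ.erase w = σ ∪ τ.erase w := by
      rw [hρ, Finset.erase_union_distrib, Finset.erase_eq_of_notMem hwσ]
    simp only [herase, SC.loc, Finset.mem_filter, Finset.mem_univ, true_and]
    constructor
    · intro h
      exact ⟨(hdisj.mono_left (Finset.erase_subset _ _)), h⟩
    · exact fun h => h.2
  rw [hτpart, ← card_powersetCard_inter τ (k - ℓ) hτc (X.loc f σ)] at heven
  have hσodd : ¬ Even ((σ.filter fun w => ρ.erase w ∈ f).card) := by
    intro h
    exact hodd ((Nat.even_add.1 heven).1 h)
  have hne : (σ.filter fun w => ρ.erase w ∈ f).Nonempty := by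
    rw [Finset.nonempty_iff_ne_empty]
    intro h
    rw [h] at hσodd
    exact hσodd (by simp)
  obtain ⟨v, hv⟩ := hne
  rw [Finset.mem_filter] at hv
  obtain ⟨hvσ, hvf⟩ := hv
  refine ⟨v, hvσ, ?_⟩
  rw [SC.restLoc, Finset.mem_filter]
  refine ⟨Finset.mem_univ _, hdisj, hface, ?_⟩
  have hvτ : v ∉ τ := fun h => (Finset.disjoint_left.1 hdisj) h hvσ
  have herase : ρ.erase v = σ.erase v ∪ τ := by
    rw [hρ, Finset.erase_union_distrib, Finset.erase_eq_of_notMem hvτ]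
  rwa [herase] at hvf

/-- Union-bound step of Theorem 5.1: for a `k`-cocycle `f` (over `𝔽₂`) and an `ℓ`-face `σ`,
the weight (in the link of `σ`) of the coboundary of the localization `f_σ` is at most the
sum over `v ∈ σ` of the weights of the restrictions `(f_{σ∖v})^v`. -/
theorem coboundary_of_localization_union_bound {V : Type*} [DecidableEq V] [Fintype V]
    (X : SC V) (d k ℓ : ℕ) (hpure : X.Pure d) (hℓk : ℓ < k) (hkd : k ≤ d)
    (f : Finset (Finset V)) (hf : f ⊆ X.kFaces k) (hcoc : X.IsCocycle ∅ k f)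
    (σ : Finset V) (hσ : σ ∈ X.kFaces ℓ) :
    X.linkNorm d σ (k - ℓ + 1) (X.cob σ (k - ℓ) (X.loc f σ)) ≤
      ∑ v ∈ σ, X.linkNorm d σ (k - ℓ + 1) (X.restLoc f σ v) := by
  have key := mem_restLoc_of_mem_cob X k ℓ hℓk f hcoc σ hσ
  unfold SC.linkNorm
  rw [← Finset.sum_div]
  set D : ℝ := ((d + 1 - σ.card).choose (k - ℓ + 1) : ℝ) * (X.topCount d σ : ℝ) with hD
  have hDnn : 0 ≤ D := by positivity
  rcases hDnn.eq_or_lt with h0 | hpos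
  · rw [← h0]
    simp
  · rw [div_le_div_iff_of_pos_right hpos]
    set w : Finset V → ℝ := fun τ => (X.topCount d (σ ∪ τ) : ℝ) with hw
    have hwnn : ∀ τ, 0 ≤ w τ := fun τ => Nat.cast_nonneg _
    calc ∑ τ ∈ X.cob σ (k - ℓ) (X.loc f σ), w τ
        ≤ ∑ τ ∈ X.cob σ (k - ℓ) (X.loc f σ),
            ∑ v ∈ σ, (if τ ∈ X.restLoc f σ v then w τ else 0) := by
          apply Finset.sum_le_sum
          intro τ hτ
          obtain ⟨v, hvσ, hvm⟩ := key τ hτ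
          have h1 := Finset.single_le_sum
            (f := fun u => if τ ∈ X.restLoc f σ u then w τ else 0)
            (fun i _ => by positivity) hvσ
          simpa [hvm] using h1
      _ = ∑ v ∈ σ, ∑ τ ∈ X.cob σ (k - ℓ) (X.loc f σ),
            (if τ ∈ X.restLoc f σ v then w τ else 0) := Finset.sum_comm
      _ ≤ ∑ v ∈ σ, ∑ τ ∈ X.restLoc f σ v, w τ := by
          apply Finset.sum_le_sum
          intro v _
          rw [Finset.sum_ite_mem]
          exact Finset.sum_le_sum_of_subset_of_nonneg (Finset.inter_subset_right)
            (fun τ _ _ => hwnn τ)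
end
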